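/- arXiv:2402.04041 — 7 statements merged into one kernel-verified Lean document; each statement's English description precedes it below -/
import Mathlib

section
/- Let 0 < γ < β ≤ 1, ν := γ/β, and N¹, N² > 0. The map (f,g) on [0,N¹]×[0,N²] given by f(x,y) = (1-γ)x + β(N¹-x)(x+y)/(N¹+N²), g(x,y) = (1-γ)y + β(N²-y)(x+y)/(N¹+N²) has exactly two fixed points: (0,0) and the endemic equilibrium ((1-ν)N¹, (1-ν)N²). -/
theorem sis_map_fixed_points
    (β γ N1 N2 : ℝ) (hγ : 0 < γ) (hγβ : γ < β) (hβ : β ≤ 1)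
    (hN1 : 0 < N1) (hN2 : 0 < N2) (ν : ℝ) (hν : ν = γ / β) :
    ∀ x y : ℝ, x ∈ Set.Icc 0 N1 → y ∈ Set.Icc 0 N2 →
      (((1 - γ) * x + β * (N1 - x) * (x + y) / (N1 + N2) = x ∧
        (1 - γ) * y + β * (N2 - y) * (x + y) / (N1 + N2) = y) ↔
       ((x = 0 ∧ y = 0) ∨ (x = (1 - ν) * N1 ∧ y = (1 - ν) * N2))) := by
  have hβ0 : 0 < β := lt_trans hγ hγβ
  have hN : 0 < N1 + N2 := by linarith
  have hNne : N1 + N2 ≠ 0 := ne_of_gt hN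
  have hβne : β ≠ 0 := ne_of_gt hβ0
  intro x y hx hy
  obtain ⟨hx0, hx1⟩ := hx
  obtain ⟨hy0, hy1⟩ := hy
  constructor
  · rintro ⟨h1, h2⟩
    have e1 : γ * x * (N1 + N2) = β * (N1 - x) * (x + y) := by
      field_simp at h1; nlinarith [h1]
    have e2 : γ * y * (N1 + N2) = β * (N2 - y) * (x + y) := by
      field_simp at h2; nlinarith [h2]
    have key : (x + y) * (γ * (N1 + N2) - β * ((N1 + N2) - (x + y))) = 0 := by
      nlinarith [e1, e2]
    rcases mul_eq_zero.mp key with hs | hs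
    · left; constructor <;> linarith
    · right
      have hs' : β * (x + y) = (β - γ) * (N1 + N2) := by nlinarith
      subst hν
      constructor
      · field_simp
        nlinarith [e1, hs']
      · field_simp
        nlinarith [e2, hs']
  · rintro (⟨hx', hy'⟩ | ⟨hx', hy'⟩)
    · subst hx'; subst hy'; norm_num
    · subst hx'; subst hy'
      have hνβ : ν * β = γ := by rw [hν]; field_simp
      constructor
      · rw [add_div' _ _ _ hNne, div_eq_iff hNne]
        linear_combination ((1 - ν) * N1 * (N1 + N2)) * hνβ
      · rw [add_div' _ _ _ hNne, div_eq_iff hNne]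
        linear_combination ((1 - ν) * N2 * (N1 + N2)) * hνβ
end

section
/- Let 0 < γ < β ≤ 1 and φ(x) = (1+β-γ-βx)x. Then φ maps the interval (0,1] into itself, and for every x₀ ∈ (0,1] the sequence of iterates φ^(k)(x₀) converges to 1 - γ/β. -/
/-!
Writing `L = 1 - γ / β`, the map satisfies `φ x - L = (x - L) (1 - β x)`. For `x₀ ∈ (0, 1]` the
interval `[m, 1]` with `m = min x₀ L` is invariant under `φ` (points below `L` move up, points
above `L` stay above it), and on it `|1 - β x| ≤ 1 - β m < 1`, so the distance to `L` shrinks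
geometrically along the orbit.
-/

open Set Filter Topology Function

theorem tendsto_iterate_of_dist_le_mul {α : Type*} [PseudoMetricSpace α] {f : α → α}
    {s : Set α} {a x : α} {q : ℝ} (hq0 : 0 ≤ q) (hq1 : q < 1) (hf : MapsTo f s s) (hx : x ∈ s)
    (hcontr : ∀ y ∈ s, dist (f y) a ≤ q * dist y a) :
    Tendsto (fun k => f^[k] x) atTop (𝓝 a) := by
  have hbound : ∀ k, dist (f^[k] x) a ≤ dist x a * q ^ k := by
    intro k
    induction k with
    | zero => simp
    | succ k ih =>
      rw [iterate_succ_apply']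
      calc dist (f (f^[k] x)) a ≤ q * dist (f^[k] x) a := hcontr _ (hf.iterate k hx)
        _ ≤ q * (dist x a * q ^ k) := mul_le_mul_of_nonneg_left ih hq0
        _ = dist x a * q ^ (k + 1) := by ring
  have hgeom : Tendsto (fun k => dist x a * q ^ k) atTop (𝓝 0) := by
    simpa using (tendsto_pow_atTop_nhds_zero_of_lt_one hq0 hq1).const_mul (dist x a)
  exact tendsto_iff_dist_tendsto_zero.2 (squeeze_zero (fun _ => dist_nonneg) hbound hgeom)

def sisMap (β γ x : ℝ) : ℝ := (1 + β - γ - β * x) * x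

section SISMap

variable {β γ x m : ℝ}

theorem one_sub_sisMap : 1 - sisMap β γ x = (1 - x) * (1 - β * x) + γ * x := by
  unfold sisMap; ring

theorem sisMap_sub_endemic (hβ : β ≠ 0) :
    sisMap β γ x - (1 - γ / β) = (x - (1 - γ / β)) * (1 - β * x) := by
  unfold sisMap; field_simp; ring

theorem sisMap_mem_Ioc (hγ0 : 0 ≤ γ) (hγ1 : γ < 1) (hβ0 : 0 ≤ β) (hβ1 : β ≤ 1)
    (hx : x ∈ Ioc 0 1) : sisMap β γ x ∈ Ioc 0 1 := by
  obtain ⟨hx0, hx1⟩ := hx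
  have hβx : β * x ≤ 1 := by nlinarith
  constructor
  · have hfactor : 0 < 1 + β - γ - β * x := by nlinarith
    exact mul_pos hfactor hx0
  · have := one_sub_sisMap (β := β) (γ := γ) (x := x)
    nlinarith [mul_nonneg (sub_nonneg.2 hx1) (sub_nonneg.2 hβx), mul_nonneg hγ0 hx0.le]

theorem min_le_sisMap (hβ : 0 < β) (hx0 : 0 ≤ x) (hβx : β * x ≤ 1) :
    min x (1 - γ / β) ≤ sisMap β γ x := by
  have h := sisMap_sub_endemic (γ := γ) (x := x) hβ.ne'
  rcases le_or_gt x (1 - γ / β) with hxL | hxL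
  · nlinarith [min_le_left x (1 - γ / β), mul_nonneg (mul_nonneg hβ.le hx0) (sub_nonneg.2 hxL)]
  · nlinarith [min_le_right x (1 - γ / β), mul_nonneg (sub_nonneg.2 hxL.le) (sub_nonneg.2 hβx)]

theorem mapsTo_sisMap_Icc (hγ0 : 0 ≤ γ) (hγβ : γ < β) (hβ1 : β ≤ 1) (hm0 : 0 < m)
    (hmL : m ≤ 1 - γ / β) : MapsTo (sisMap β γ) (Icc m 1) (Icc m 1) := by
  intro y ⟨hmy, hy1⟩
  have hβ0 : 0 < β := hγ0.trans_lt hγβ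
  have hy0 : 0 < y := hm0.trans_le hmy
  refine ⟨?_, (sisMap_mem_Ioc hγ0 (hγβ.trans_le hβ1) hβ0.le hβ1 ⟨hy0, hy1⟩).2⟩
  calc m ≤ min y (1 - γ / β) := le_min hmy hmL
    _ ≤ sisMap β γ y := min_le_sisMap hβ0 hy0.le (mul_le_one₀ hβ1 hy0.le hy1)

theorem abs_sisMap_sub_endemic_le (hβ0 : 0 < β) (hβ1 : β ≤ 1) {y : ℝ} (hy : y ∈ Icc m 1) :
    |sisMap β γ y - (1 - γ / β)| ≤ (1 - β * m) * |y - (1 - γ / β)| := by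
  obtain ⟨hmy, hy1⟩ := hy
  have hβy : β * y ≤ 1 := by nlinarith
  rw [sisMap_sub_endemic hβ0.ne', abs_mul, mul_comm, abs_of_nonneg (sub_nonneg.2 hβy)]
  gcongr

end SISMap

theorem infection_fraction_map_convergence
    (β γ : ℝ) (hγ : 0 < γ) (hγβ : γ < β) (hβ : β ≤ 1)
    (φ : ℝ → ℝ) (hφ : ∀ x, φ x = (1 + β - γ - β * x) * x) :
    (∀ x ∈ Set.Ioc (0:ℝ) 1, φ x ∈ Set.Ioc (0:ℝ) 1) ∧
    (∀ x ∈ Set.Ioc (0:ℝ) 1,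
      Filter.Tendsto (fun k => φ^[k] x) Filter.atTop (nhds (1 - γ / β))) := by
  have hβ0 : 0 < β := hγ.trans hγβ
  obtain rfl : φ = sisMap β γ := funext hφ
  refine ⟨fun x hx => sisMap_mem_Ioc hγ.le (hγβ.trans_le hβ) hβ0.le hβ hx, fun x hx => ?_⟩
  have hL0 : 0 < 1 - γ / β := sub_pos.2 ((div_lt_one hβ0).2 hγβ)
  set m := min x (1 - γ / β)
  have hm0 : 0 < m := lt_min hx.1 hL0
  have hm1 : m ≤ 1 := (min_le_left _ _).trans hx.2
  refine tendsto_iterate_of_dist_le_mul (q := 1 - β * m) ?_ ?_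
    (mapsTo_sisMap_Icc hγ.le hγβ hβ hm0 (min_le_right _ _)) ⟨min_le_left _ _, hx.2⟩
    fun y hy => ?_
  · exact sub_nonneg.2 (mul_le_one₀ hβ hm0.le hm1)
  · exact sub_lt_self 1 (mul_pos hβ0 hm0)
  · simpa only [Real.dist_eq] using abs_sisMap_sub_endemic_le hβ0 hβ hy
end

section
/- Let 0 < γ < β ≤ 1 and φ(x) = (1+β-γ-βx)x. Then for every x ∈ (0,1] and every k ≥ 0, |1 - γ - βφ^(k)(x)| ≤ max{1-γ, |1-γ-β|} < 1. -/
theorem infection_fraction_offdiag_bound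
    (β γ : ℝ) (hγ : 0 < γ) (hγβ : γ < β) (hβ : β ≤ 1)
    (φ : ℝ → ℝ) (hφ : ∀ x, φ x = (1 + β - γ - β * x) * x) :
    ∀ x ∈ Set.Ioc (0:ℝ) 1, ∀ k : ℕ,
      |1 - γ - β * φ^[k] x| ≤ max (1 - γ) |1 - γ - β| ∧
      max (1 - γ) |1 - γ - β| < 1 := by
  have hγ1 : γ < 1 := hγβ.trans_le hβ
  have hβ0 : 0 < β := hγ.trans hγβ
  have hmap : ∀ y ∈ Set.Ioc (0:ℝ) 1, φ y ∈ Set.Ioc (0:ℝ) 1 := by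
    rintro y ⟨hy0, hy1⟩
    rw [hφ]
    constructor
    · have : 1 + β - γ - β * y > 0 := by nlinarith
      positivity
    · nlinarith [mul_nonneg (sub_nonneg.mpr hy1) (sub_nonneg.mpr (show β * y ≤ 1 by nlinarith))]
  rintro x hx k
  have hiter : φ^[k] x ∈ Set.Ioc (0:ℝ) 1 := by
    induction k with
    | zero => simpa using hx
    | succ n ih => rw [Function.iterate_succ_apply']; exact hmap _ ih
  obtain ⟨hy0, hy1⟩ := hiter
  constructor
  · rw [abs_le]
    constructor
    · have h1 : -|1 - γ - β| ≤ 1 - γ - β := neg_abs_le _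
      have h2 : 1 - γ - β ≤ 1 - γ - β * φ^[k] x := by nlinarith
      exact le_trans (le_trans (neg_le_neg (le_max_right _ _)) h1) h2
    · have : 1 - γ - β * φ^[k] x ≤ 1 - γ := by nlinarith
      exact this.trans (le_max_left _ _)
  · rw [max_lt_iff, abs_lt]
    refine ⟨by linarith, by linarith, by linarith⟩
end

section
/- Let r_S, r_I ≥ 0, r_S + r_I > 1, and positive coefficients c_{S1}, c_{S2}, c_{I1}, c_{I2}. The portion of the level set {φ = 1} (for φ(x₁,x₂) = r_S/(1+c_{S1}x₁+c_{S2}x₂) + r_I/(1+c_{I1}x₁+c_{I2}x₂)) lying in the closed nonnegative quadrant is the graph of a strictly decreasing convex function x₂ = Φ(x₁) defined on [0, R₁], where R₁ is the intercept with the positive x₁-axis. -/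
/-! The denominators are affine and positive on the closed quadrant, so `φ` is jointly convex
there and strictly decreasing in each variable. For `0 ≤ x₁ ≤ R₁` we have `φ x₁ 0 ≥ φ R₁ 0 = 1`
while `φ x₁ x₂ → 0` as `x₂ → ∞`, so `φ x₁ · = 1` has exactly one root `Φ x₁ ≥ 0`. Along a chord
of the graph of `Φ`, convexity gives `φ ≤ 1`, and since `φ` decreases in `x₂` the graph lies
below the chord. -/

open Set Filter Topology Function

section LevelSet

variable {f : ℝ → ℝ → ℝ} {c R : ℝ} {Φ : ℝ → ℝ}

lemma exists_level_of_mem_Icc (hanti₁ : ∀ y, 0 ≤ y → StrictAntiOn (f · y) (Ici 0))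
    (hcont : ∀ x, 0 ≤ x → ContinuousOn (f x) (Ici 0))
    (hsmall : ∀ x, 0 ≤ x → ∃ M, 0 ≤ M ∧ f x M < c) (hR : f R 0 = c)
    {x : ℝ} (hx : x ∈ Icc 0 R) : ∃ y, 0 ≤ y ∧ f x y = c := by
  obtain ⟨M, hM, hfM⟩ := hsmall x hx.1
  have hf0 : c ≤ f x 0 := hR ▸ (hanti₁ 0 le_rfl).antitoneOn hx.1 (hx.1.trans hx.2) hx.2
  obtain ⟨y, hy, hfy⟩ :=
    intermediate_value_Icc' hM ((hcont x hx.1).mono Icc_subset_Ici_self) ⟨hfM.le, hf0⟩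
  exact ⟨y, hy.1, hfy⟩

lemma le_of_level (hanti₁ : ∀ y, 0 ≤ y → StrictAntiOn (f · y) (Ici 0))
    (hanti₂ : ∀ x, 0 ≤ x → StrictAntiOn (f x) (Ici 0)) (hR₀ : 0 ≤ R) (hR : f R 0 = c)
    {x y : ℝ} (hy : 0 ≤ y) (hxy : f x y = c) : x ≤ R := by
  by_contra! hRx
  have hx : 0 ≤ x := hR₀.trans hRx.le
  have h₂ : f x y ≤ f x 0 := (hanti₂ x hx).antitoneOn self_mem_Ici hy hy
  have h₁ : f x 0 < f R 0 := hanti₁ 0 le_rfl hR₀ hx hRx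
  linarith

lemma strictAntiOn_of_level (hanti₁ : ∀ y, 0 ≤ y → StrictAntiOn (f · y) (Ici 0))
    (hanti₂ : ∀ x, 0 ≤ x → StrictAntiOn (f x) (Ici 0))
    (hΦ : ∀ x ∈ Icc 0 R, 0 ≤ Φ x ∧ f x (Φ x) = c) : StrictAntiOn Φ (Icc 0 R) := by
  intro x hx y hy hxy
  have h : f y (Φ x) < f y (Φ y) := by
    rw [(hΦ y hy).2, ← (hΦ x hx).2]
    exact hanti₁ _ (hΦ x hx).1 hx.1 hy.1 hxy
  exact ((hanti₂ y hy.1).lt_iff_gt (hΦ x hx).1 (hΦ y hy).1).1 h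

lemma convexOn_of_level (hanti₂ : ∀ x, 0 ≤ x → StrictAntiOn (f x) (Ici 0))
    (hconv : ConvexOn ℝ (Ici 0 ×ˢ Ici 0) (uncurry f))
    (hΦ : ∀ x ∈ Icc 0 R, 0 ≤ Φ x ∧ f x (Φ x) = c) : ConvexOn ℝ (Icc 0 R) Φ := by
  refine ⟨convex_Icc 0 R, fun x hx y hy a b ha hb hab => ?_⟩
  have hz := convex_Icc 0 R hx hy ha hb hab
  have hw : 0 ≤ a • Φ x + b • Φ y := by
    have := (hΦ x hx).1; have := (hΦ y hy).1; positivity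
  have h : f (a • x + b • y) (a • Φ x + b • Φ y) ≤ f (a • x + b • y) (Φ (a • x + b • y)) :=
    calc _ ≤ a • f x (Φ x) + b • f y (Φ y) :=
          hconv.2 (x := (x, Φ x)) (y := (y, Φ y)) ⟨hx.1, (hΦ x hx).1⟩ ⟨hy.1, (hΦ y hy).1⟩ ha hb hab
      _ = _ := by rw [(hΦ x hx).2, (hΦ y hy).2, (hΦ _ hz).2, ← add_smul, hab, one_smul]
  exact ((hanti₂ _ hz.1).le_iff_ge hw (hΦ _ hz).1).1 h

theorem exists_graph_eq_level_of_convexOn_of_strictAntiOn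
    (hanti₁ : ∀ y, 0 ≤ y → StrictAntiOn (f · y) (Ici 0))
    (hanti₂ : ∀ x, 0 ≤ x → StrictAntiOn (f x) (Ici 0))
    (hconv : ConvexOn ℝ (Ici 0 ×ˢ Ici 0) (uncurry f))
    (hcont : ∀ x, 0 ≤ x → ContinuousOn (f x) (Ici 0))
    (hsmall : ∀ x, 0 ≤ x → ∃ M, 0 ≤ M ∧ f x M < c) (hR₀ : 0 ≤ R) (hR : f R 0 = c) :
    ∃ Φ : ℝ → ℝ, StrictAntiOn Φ (Icc 0 R) ∧ ConvexOn ℝ (Icc 0 R) Φ ∧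
      ∀ x y, 0 ≤ x → 0 ≤ y → (f x y = c ↔ x ∈ Icc 0 R ∧ y = Φ x) := by
  choose! Φ hΦ using fun x (hx : x ∈ Icc 0 R) =>
    exists_level_of_mem_Icc hanti₁ hcont hsmall hR hx
  refine ⟨Φ, strictAntiOn_of_level hanti₁ hanti₂ hΦ, convexOn_of_level hanti₂ hconv hΦ,
    fun x y hx hy => ⟨fun hxy => ?_, ?_⟩⟩
  · have hxR : x ∈ Icc 0 R := ⟨hx, le_of_level hanti₁ hanti₂ hR₀ hR hy hxy⟩
    exact ⟨hxR, (hanti₂ x hx).injOn hy (hΦ x hxR).1 (hxy.trans (hΦ x hxR).2.symm)⟩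
  · rintro ⟨hxR, rfl⟩
    exact (hΦ x hxR).2

end LevelSet

lemma div_add_div_lt_div_add_div {r s d₁ d₂ e₁ e₂ : ℝ} (hr : 0 ≤ r) (hs : 0 ≤ s)
    (hrs : 0 < r + s) (hd₁ : 0 < d₁) (hd₂ : 0 < d₂) (h₁ : d₁ < e₁) (h₂ : d₂ < e₂) :
    r / e₁ + s / e₂ < r / d₁ + s / d₂ := by
  rcases hr.eq_or_lt with rfl | hr
  · simp only [zero_div, zero_add] at hrs ⊢
    exact div_lt_div_of_pos_left hrs hd₂ h₂
  · exact add_lt_add_of_lt_of_le (div_lt_div_of_pos_left hr hd₁ h₁)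
      (div_le_div_of_nonneg_left hs hd₂ h₂.le)

section AffineDenominator

variable {r c₁ c₂ : ℝ}

lemma convexOn_div_one_add_mul_add_mul (hr : 0 ≤ r) (hc₁ : 0 ≤ c₁) (hc₂ : 0 ≤ c₂) :
    ConvexOn ℝ (Ici 0 ×ˢ Ici 0) fun p : ℝ × ℝ => r / (1 + c₁ * p.1 + c₂ * p.2) := by
  refine ⟨(convex_Ici 0).prod (convex_Ici 0), fun p hp q hq a b ha hb hab => ?_⟩
  have hd : ∀ p ∈ Ici (0 : ℝ) ×ˢ Ici 0, 0 < 1 + c₁ * p.1 + c₂ * p.2 := fun p ⟨h₁, h₂⟩ => by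
    simp only [mem_Ici] at h₁ h₂; positivity
  have h := ((convexOn_zpow (𝕜 := ℝ) (-1)).smul hr).2 (hd p hp) (hd q hq) ha hb hab
  have e : 1 + c₁ * (a • p + b • q).1 + c₂ * (a • p + b • q).2
      = a • (1 + c₁ * p.1 + c₂ * p.2) + b • (1 + c₁ * q.1 + c₂ * q.2) := by
    simp only [Prod.fst_add, Prod.snd_add, Prod.smul_fst, Prod.smul_snd, smul_eq_mul]
    linear_combination -hab
  simpa only [e, smul_eq_mul, zpow_neg_one, div_eq_mul_inv] using h

lemma tendsto_div_one_add_mul_add_mul_atTop (hc₂ : 0 < c₂) (x : ℝ) :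
    Tendsto (fun y => r / (1 + c₁ * x + c₂ * y)) atTop (𝓝 0) :=
  tendsto_const_nhds.div_atTop
    (tendsto_atTop_add_const_left _ _ (tendsto_id.const_mul_atTop hc₂))

lemma continuousOn_div_one_add_mul_add_mul (hc₁ : 0 ≤ c₁) (hc₂ : 0 ≤ c₂) {x : ℝ} (hx : 0 ≤ x) :
    ContinuousOn (fun y => r / (1 + c₁ * x + c₂ * y)) (Ici 0) :=
  continuousOn_const.div (by fun_prop) fun y (hy : 0 ≤ y) => by positivity

end AffineDenominator

theorem isocline_is_graph_of_decreasing_convex_function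
    (rS rI cS1 cS2 cI1 cI2 : ℝ)
    (hrS : 0 ≤ rS) (hrI : 0 ≤ rI) (hr : 1 < rS + rI)
    (hcS1 : 0 < cS1) (hcS2 : 0 < cS2) (hcI1 : 0 < cI1) (hcI2 : 0 < cI2)
    (φ : ℝ → ℝ → ℝ)
    (hφ : ∀ x1 x2, φ x1 x2 =
      rS / (1 + cS1 * x1 + cS2 * x2) + rI / (1 + cI1 * x1 + cI2 * x2))
    (R1 : ℝ) (hR1pos : 0 < R1) (hR1 : φ R1 0 = 1) :
    ∃ Φ : ℝ → ℝ,
      StrictAntiOn Φ (Set.Icc 0 R1) ∧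
      ConvexOn ℝ (Set.Icc 0 R1) Φ ∧
      ∀ x1 x2 : ℝ, 0 ≤ x1 → 0 ≤ x2 →
        (φ x1 x2 = 1 ↔ (x1 ∈ Set.Icc 0 R1 ∧ x2 = Φ x1)) := by
  obtain rfl : φ = fun x1 x2 =>
      rS / (1 + cS1 * x1 + cS2 * x2) + rI / (1 + cI1 * x1 + cI2 * x2) :=
    funext fun x1 => funext (hφ x1)
  have hrSI : 0 < rS + rI := by linarith
  refine exists_graph_eq_level_of_convexOn_of_strictAntiOn ?_ ?_ ?_ ?_ ?_ hR1pos.le hR1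
  · intro x2 hx2 x1 (hx1 : 0 ≤ x1) x1' _ hlt
    exact div_add_div_lt_div_add_div hrS hrI hrSI (by positivity) (by positivity)
      (by gcongr) (by gcongr)
  · intro x1 hx1 x2 (hx2 : 0 ≤ x2) x2' _ hlt
    exact div_add_div_lt_div_add_div hrS hrI hrSI (by positivity) (by positivity)
      (by gcongr) (by gcongr)
  · exact (convexOn_div_one_add_mul_add_mul hrS hcS1.le hcS2.le).add
      (convexOn_div_one_add_mul_add_mul hrI hcI1.le hcI2.le)
  · intro x1 hx1
    exact (continuousOn_div_one_add_mul_add_mul hcS1.le hcS2.le hx1).add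
      (continuousOn_div_one_add_mul_add_mul hcI1.le hcI2.le hx1)
  · intro x1 _
    have h := (tendsto_div_one_add_mul_add_mul_atTop (r := rS) (c₁ := cS1) hcS2 x1).add
      (tendsto_div_one_add_mul_add_mul_atTop (r := rI) (c₁ := cI1) hcI2 x1)
    rw [add_zero] at h
    obtain ⟨M, hM, hM₀⟩ := ((h.eventually (gt_mem_nhds one_pos)).and (eventually_ge_atTop 0)).exists
    exact ⟨M, hM₀, hM⟩
end

section
/- Consider the reduced-model map H(x₁,x₂) = (φ₁(x₁,x₂)x₁, φ₂(x₁,x₂)x₂) with φ_i(x₁,x₂) = r_S^i/(1+c_{S1}^i x₁+c_{S2}^i x₂) + r_I^i/(1+c_{I1}^i x₁+c_{I2}^i x₂), all c > 0, r_S^i > 0, r_I^i ≥ 0. If φ_i(0,0) = r_S^i + r_I^i ≤ 1, then for any initial condition in ℝ₊² the i-th component of the orbit of H converges to 0. -/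
open Filter

lemma ext_aux (rS rI cS cI d e : ℝ) (hrS : 0 < rS) (hrI : 0 ≤ rI)
    (hcS : 0 < cS) (hcI : 0 < cI) (hd : 0 ≤ d) (he : 0 ≤ e) (hr : rS + rI ≤ 1)
    (a b : ℕ → ℝ) (ha : ∀ n, 0 ≤ a n) (hb : ∀ n, 0 ≤ b n)
    (hrec : ∀ n, a (n+1) =
      (rS / (1 + cS * a n + d * b n) + rI / (1 + cI * a n + e * b n)) * a n) :
    Tendsto a atTop (nhds 0) := by
  have key : ∀ L : ℝ, 0 ≤ L → ∀ n, L ≤ a n →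
      a (n+1) ≤ (rS / (1 + cS * L) + rI / (1 + cI * L)) * a n := by
    intro L hL n hLn
    rw [hrec n]
    apply mul_le_mul_of_nonneg_right _ (ha n)
    have h1 : (0:ℝ) < 1 + cS * L := by nlinarith
    have h2 : (0:ℝ) < 1 + cI * L := by nlinarith
    have hb1 : 0 ≤ d * b n := mul_nonneg hd (hb n)
    have hb2 : 0 ≤ e * b n := mul_nonneg he (hb n)
    have hm1 : cS * L ≤ cS * a n := mul_le_mul_of_nonneg_left hLn hcS.le
    have hm2 : cI * L ≤ cI * a n := mul_le_mul_of_nonneg_left hLn hcI.le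
    apply add_le_add
    · exact div_le_div_of_nonneg_left hrS.le h1 (by linarith)
    · exact div_le_div_of_nonneg_left hrI h2 (by linarith)
  have hant : Antitone a := by
    refine antitone_nat_of_succ_le (fun n => ?_)
    have := key 0 le_rfl n (ha n)
    simp at this
    nlinarith [ha n]
  have hbdd : BddBelow (Set.range a) := ⟨0, by rintro x ⟨n, rfl⟩; exact ha n⟩
  set L := ⨅ n, a n with hLdef
  have htend : Tendsto a atTop (nhds L) := tendsto_atTop_ciInf hant hbdd
  have hL0 : 0 ≤ L := le_ciInf ha
  have hLle : ∀ n, L ≤ a n := fun n => ciInf_le hbdd n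
  have hLzero : L = 0 := by
    by_contra h
    have hLpos : 0 < L := lt_of_le_of_ne hL0 (Ne.symm h)
    set q := rS / (1 + cS * L) + rI / (1 + cI * L) with hq
    have h1 : (1:ℝ) < 1 + cS * L := by nlinarith
    have h2 : (1:ℝ) < 1 + cI * L := by nlinarith
    have hq1 : q < 1 := by
      have : rS / (1 + cS * L) < rS / 1 := by
        apply div_lt_div_of_pos_left hrS one_pos h1
      have h2' : rI / (1 + cI * L) ≤ rI := div_le_self hrI h2.le
      simp at this
      rw [hq]; linarith
    have hq0 : 0 ≤ q := by
      rw [hq]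
      apply add_nonneg
      · positivity
      · apply div_nonneg hrI; linarith
    have hpow : ∀ n, a n ≤ q ^ n * a 0 := by
      intro n
      induction n with
      | zero => simp
      | succ k ih =>
        have := key L hL0 k (hLle k)
        calc a (k+1) ≤ q * a k := this
          _ ≤ q * (q ^ k * a 0) := by
              apply mul_le_mul_of_nonneg_left ih hq0
          _ = q ^ (k+1) * a 0 := by ring
    have htz : Tendsto (fun n => q ^ n * a 0) atTop (nhds 0) := by
      have := (tendsto_pow_atTop_nhds_zero_of_lt_one hq0 hq1).mul_const (a 0)
      simpa using this
    have : L ≤ 0 := le_of_tendsto_of_tendsto tendsto_const_nhds htz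
      (Eventually.of_forall fun n => (hLle n).trans (hpow n))
    linarith
  rwa [hLzero] at htend


theorem reduced_map_extinction_criterion
    (rS1 rI1 rS2 rI2 : ℝ) (hrS1 : 0 < rS1) (hrI1 : 0 ≤ rI1)
    (hrS2 : 0 < rS2) (hrI2 : 0 ≤ rI2)
    (c1S1 c1S2 c1I1 c1I2 c2S1 c2S2 c2I1 c2I2 : ℝ)
    (hc1S1 : 0 < c1S1) (hc1S2 : 0 < c1S2) (hc1I1 : 0 < c1I1) (hc1I2 : 0 < c1I2)
    (hc2S1 : 0 < c2S1) (hc2S2 : 0 < c2S2) (hc2I1 : 0 < c2I1) (hc2I2 : 0 < c2I2)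
    (φ1 φ2 : ℝ → ℝ → ℝ)
    (hφ1 : ∀ x1 x2, φ1 x1 x2 =
      rS1 / (1 + c1S1 * x1 + c1S2 * x2) + rI1 / (1 + c1I1 * x1 + c1I2 * x2))
    (hφ2 : ∀ x1 x2, φ2 x1 x2 =
      rS2 / (1 + c2S1 * x1 + c2S2 * x2) + rI2 / (1 + c2I1 * x1 + c2I2 * x2))
    (H : ℝ × ℝ → ℝ × ℝ)
    (hH : ∀ p : ℝ × ℝ, H p = (φ1 p.1 p.2 * p.1, φ2 p.1 p.2 * p.2)) :
    (rS1 + rI1 ≤ 1 → ∀ p : ℝ × ℝ, 0 ≤ p.1 → 0 ≤ p.2 →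
      Filter.Tendsto (fun n => (H^[n] p).1) Filter.atTop (nhds 0)) ∧
    (rS2 + rI2 ≤ 1 → ∀ p : ℝ × ℝ, 0 ≤ p.1 → 0 ≤ p.2 →
      Filter.Tendsto (fun n => (H^[n] p).2) Filter.atTop (nhds 0)) := by
  have hden : ∀ (c d x y : ℝ), 0 < c → 0 < d → 0 ≤ x → 0 ≤ y → 0 < 1 + c * x + d * y := by
    intro c d x y hc hd hx hy; nlinarith
  have hnn : ∀ p : ℝ × ℝ, 0 ≤ p.1 → 0 ≤ p.2 → ∀ n,
      0 ≤ (H^[n] p).1 ∧ 0 ≤ (H^[n] p).2 := by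
    intro p hp1 hp2 n
    induction n with
    | zero => exact ⟨hp1, hp2⟩
    | succ k ih =>
      rw [Function.iterate_succ_apply', hH]
      obtain ⟨h1, h2⟩ := ih
      constructor
      · apply mul_nonneg _ h1
        rw [hφ1]
        apply add_nonneg
        · exact div_nonneg hrS1.le (hden _ _ _ _ hc1S1 hc1S2 h1 h2).le
        · exact div_nonneg hrI1 (hden _ _ _ _ hc1I1 hc1I2 h1 h2).le
      · apply mul_nonneg _ h2
        rw [hφ2]
        apply add_nonneg
        · exact div_nonneg hrS2.le (hden _ _ _ _ hc2S1 hc2S2 h1 h2).le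
        · exact div_nonneg hrI2 (hden _ _ _ _ hc2I1 hc2I2 h1 h2).le
  constructor
  · intro hr p hp1 hp2
    apply ext_aux rS1 rI1 c1S1 c1I1 c1S2 c1I2 hrS1 hrI1 hc1S1 hc1I1 hc1S2.le hc1I2.le hr
      (fun n => (H^[n] p).1) (fun n => (H^[n] p).2)
      (fun n => (hnn p hp1 hp2 n).1) (fun n => (hnn p hp1 hp2 n).2)
    intro n
    rw [Function.iterate_succ_apply', hH, hφ1]
  · intro hr p hp1 hp2
    apply ext_aux rS2 rI2 c2S2 c2I2 c2S1 c2I1 hrS2 hrI2 hc2S2 hc2I2 hc2S1.le hc2I1.le hr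
      (fun n => (H^[n] p).2) (fun n => (H^[n] p).1)
      (fun n => (hnn p hp1 hp2 n).2) (fun n => (hnn p hp1 hp2 n).1)
    intro n
    rw [Function.iterate_succ_apply', hH, hφ2]
    ring_nf
end

section
/- For the reduced-model map H as above, if φ₁(0,0) ≤ 1 and φ₂(0,0) ≤ 1 then every orbit in ℝ₊² converges to the origin; moreover if both inequalities are strict then the origin is a hyperbolic fixed point of H (the eigenvalues of DH(0,0), which equal φ₁(0,0) and φ₂(0,0), have modulus different from 1). -/
theorem reduced_map_global_extinction_and_hyperbolicity
    (rS1 rI1 rS2 rI2 : ℝ) (hrS1 : 0 < rS1) (hrI1 : 0 ≤ rI1)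
    (hrS2 : 0 < rS2) (hrI2 : 0 ≤ rI2)
    (c1S1 c1S2 c1I1 c1I2 c2S1 c2S2 c2I1 c2I2 : ℝ)
    (hc1S1 : 0 < c1S1) (hc1S2 : 0 < c1S2) (hc1I1 : 0 < c1I1) (hc1I2 : 0 < c1I2)
    (hc2S1 : 0 < c2S1) (hc2S2 : 0 < c2S2) (hc2I1 : 0 < c2I1) (hc2I2 : 0 < c2I2)
    (φ1 φ2 : ℝ → ℝ → ℝ)
    (hφ1 : ∀ x1 x2, φ1 x1 x2 =
      rS1 / (1 + c1S1 * x1 + c1S2 * x2) + rI1 / (1 + c1I1 * x1 + c1I2 * x2))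
    (hφ2 : ∀ x1 x2, φ2 x1 x2 =
      rS2 / (1 + c2S1 * x1 + c2S2 * x2) + rI2 / (1 + c2I1 * x1 + c2I2 * x2))
    (H : ℝ × ℝ → ℝ × ℝ)
    (hH : ∀ p : ℝ × ℝ, H p = (φ1 p.1 p.2 * p.1, φ2 p.1 p.2 * p.2))
    (h1 : φ1 0 0 ≤ 1) (h2 : φ2 0 0 ≤ 1) :
    (∀ p : ℝ × ℝ, 0 ≤ p.1 → 0 ≤ p.2 →
      Filter.Tendsto (fun n => H^[n] p) Filter.atTop (nhds ((0:ℝ), (0:ℝ)))) ∧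
    (φ1 0 0 < 1 → φ2 0 0 < 1 →
      H (0, 0) = (0, 0) ∧ |φ1 0 0| ≠ 1 ∧ |φ2 0 0| ≠ 1) := by
  have hv1 : φ1 0 0 = rS1 + rI1 := by rw [hφ1]; norm_num
  have hv2 : φ2 0 0 = rS2 + rI2 := by rw [hφ2]; norm_num
  have key : ∀ x1 x2 : ℝ, 0 ≤ x1 → 0 ≤ x2 →
      0 ≤ φ1 x1 x2 ∧ φ1 x1 x2 ≤ 1 ∧ 0 ≤ φ2 x1 x2 ∧ φ2 x1 x2 ≤ 1 := by
    intro x1 x2 hx1 hx2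
    have d1 : (1:ℝ) ≤ 1 + c1S1*x1 + c1S2*x2 := by nlinarith
    have d2 : (1:ℝ) ≤ 1 + c1I1*x1 + c1I2*x2 := by nlinarith
    have d3 : (1:ℝ) ≤ 1 + c2S1*x1 + c2S2*x2 := by nlinarith
    have d4 : (1:ℝ) ≤ 1 + c2I1*x1 + c2I2*x2 := by nlinarith
    refine ⟨?_, ?_, ?_, ?_⟩
    · rw [hφ1]
      have := div_nonneg hrS1.le (by linarith : (0:ℝ) ≤ 1 + c1S1*x1 + c1S2*x2)
      have := div_nonneg hrI1 (by linarith : (0:ℝ) ≤ 1 + c1I1*x1 + c1I2*x2)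
      linarith
    · rw [hφ1]
      have := div_le_self hrS1.le d1
      have := div_le_self hrI1 d2
      linarith [hv1 ▸ h1]
    · rw [hφ2]
      have := div_nonneg hrS2.le (by linarith : (0:ℝ) ≤ 1 + c2S1*x1 + c2S2*x2)
      have := div_nonneg hrI2 (by linarith : (0:ℝ) ≤ 1 + c2I1*x1 + c2I2*x2)
      linarith
    · rw [hφ2]
      have := div_le_self hrS2.le d3
      have := div_le_self hrI2 d4
      linarith [hv2 ▸ h2]
  constructor
  · intro p hp1 hp2
    set f : ℕ → ℝ × ℝ := fun n => H^[n] p with hf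
    have inv : ∀ n, 0 ≤ (f n).1 ∧ 0 ≤ (f n).2 := by
      intro n
      induction n with
      | zero => exact ⟨hp1, hp2⟩
      | succ n ih =>
        have hstep : f (n+1) = H (f n) := by
          simp [hf, Function.iterate_succ_apply']
        rw [hstep, hH]
        obtain ⟨k1, k2, k3, k4⟩ := key (f n).1 (f n).2 ih.1 ih.2
        exact ⟨mul_nonneg k1 ih.1, mul_nonneg k3 ih.2⟩
    have anti1 : Antitone (fun n => (f n).1) := by
      apply antitone_nat_of_succ_le
      intro n
      have hstep : f (n+1) = H (f n) := by simp [hf, Function.iterate_succ_apply']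
      rw [hstep, hH]
      obtain ⟨k1, k2, k3, k4⟩ := key (f n).1 (f n).2 (inv n).1 (inv n).2
      calc φ1 (f n).1 (f n).2 * (f n).1 ≤ 1 * (f n).1 :=
            mul_le_mul_of_nonneg_right k2 (inv n).1
        _ = (f n).1 := one_mul _
    have anti2 : Antitone (fun n => (f n).2) := by
      apply antitone_nat_of_succ_le
      intro n
      have hstep : f (n+1) = H (f n) := by simp [hf, Function.iterate_succ_apply']
      rw [hstep, hH]
      obtain ⟨k1, k2, k3, k4⟩ := key (f n).1 (f n).2 (inv n).1 (inv n).2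
      calc φ2 (f n).1 (f n).2 * (f n).2 ≤ 1 * (f n).2 :=
            mul_le_mul_of_nonneg_right k4 (inv n).2
        _ = (f n).2 := one_mul _
    set a : ℝ := ⨅ n, (f n).1 with ha
    set b : ℝ := ⨅ n, (f n).2 with hb
    have bdd1 : BddBelow (Set.range fun n => (f n).1) :=
      ⟨0, by rintro x ⟨n, rfl⟩; exact (inv n).1⟩
    have bdd2 : BddBelow (Set.range fun n => (f n).2) :=
      ⟨0, by rintro x ⟨n, rfl⟩; exact (inv n).2⟩
    have ta : Filter.Tendsto (fun n => (f n).1) Filter.atTop (nhds a) :=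
      tendsto_atTop_ciInf anti1 bdd1
    have tb : Filter.Tendsto (fun n => (f n).2) Filter.atTop (nhds b) :=
      tendsto_atTop_ciInf anti2 bdd2
    have ha0 : 0 ≤ a := le_ciInf fun n => (inv n).1
    have hb0 : 0 ≤ b := le_ciInf fun n => (inv n).2
    have tlim : Filter.Tendsto f Filter.atTop (nhds (a, b)) := by
      have := ta.prodMk_nhds tb
      simpa using this
    -- continuity of H at (a,b)
    have contden : ∀ c d : ℝ, ContinuousAt (fun q : ℝ × ℝ => 1 + c*q.1 + d*q.2) (a, b) := by
      intro c d; fun_prop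
    have hne1 : (1 + c1S1*a + c1S2*b) ≠ 0 := by positivity
    have hne2 : (1 + c1I1*a + c1I2*b) ≠ 0 := by positivity
    have hne3 : (1 + c2S1*a + c2S2*b) ≠ 0 := by positivity
    have hne4 : (1 + c2I1*a + c2I2*b) ≠ 0 := by positivity
    have hHG : H = fun q : ℝ × ℝ =>
        ((rS1 / (1 + c1S1 * q.1 + c1S2 * q.2) + rI1 / (1 + c1I1 * q.1 + c1I2 * q.2)) * q.1,
         (rS2 / (1 + c2S1 * q.1 + c2S2 * q.2) + rI2 / (1 + c2I1 * q.1 + c2I2 * q.2)) * q.2) := by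
      funext q
      rw [hH, hφ1, hφ2]
    have contH : ContinuousAt H (a, b) := by
      rw [hHG]
      apply ContinuousAt.prodMk
      · exact (((continuousAt_const.div (contden _ _) hne1).add
          (continuousAt_const.div (contden _ _) hne2)).mul continuousAt_fst)
      · exact (((continuousAt_const.div (contden _ _) hne3).add
          (continuousAt_const.div (contden _ _) hne4)).mul continuousAt_snd)
    have hfix : H (a, b) = (a, b) := by
      have t1 : Filter.Tendsto (fun n => f (n+1)) Filter.atTop (nhds (a, b)) :=
        tlim.comp (Filter.tendsto_add_atTop_nat 1)
      have t2 : Filter.Tendsto (fun n => f (n+1)) Filter.atTop (nhds (H (a, b))) := by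
        have h3 := contH.tendsto.comp tlim
        have : (fun n => f (n+1)) = H ∘ f := by
          funext n; simp [hf, Function.iterate_succ_apply']
        rw [this]; exact h3
      exact tendsto_nhds_unique t2 t1
    have ha' : a = 0 := by
      by_contra hne
      have hapos : 0 < a := lt_of_le_of_ne ha0 (Ne.symm hne)
      have heq : φ1 a b * a = a := by
        have := congrArg Prod.fst hfix
        rwa [hH] at this
      have hφeq : φ1 a b = 1 := by
        have h' : φ1 a b * a = 1 * a := by rw [one_mul]; exact heq
        exact mul_right_cancel₀ hne h'
      have hd1 : (1:ℝ) < 1 + c1S1*a + c1S2*b := by nlinarith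
      have hd2 : (1:ℝ) ≤ 1 + c1I1*a + c1I2*b := by nlinarith
      have hlt : φ1 a b < rS1 + rI1 := by
        rw [hφ1]
        have := div_lt_self hrS1 hd1
        have := div_le_self hrI1 hd2
        linarith
      have := hv1 ▸ h1
      linarith
    have hb' : b = 0 := by
      by_contra hne
      have hbpos : 0 < b := lt_of_le_of_ne hb0 (Ne.symm hne)
      have heq : φ2 a b * b = b := by
        have := congrArg Prod.snd hfix
        rwa [hH] at this
      have hφeq : φ2 a b = 1 := by
        have h' : φ2 a b * b = 1 * b := by rw [one_mul]; exact heq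
        exact mul_right_cancel₀ hne h'
      have hd1 : (1:ℝ) < 1 + c2S1*a + c2S2*b := by nlinarith
      have hd2 : (1:ℝ) ≤ 1 + c2I1*a + c2I2*b := by nlinarith
      have hlt : φ2 a b < rS2 + rI2 := by
        rw [hφ2]
        have := div_lt_self hrS2 hd1
        have := div_le_self hrI2 hd2
        linarith
      have := hv2 ▸ h2
      linarith
    rw [ha', hb'] at tlim
    exact tlim
  · intro h1' h2'
    refine ⟨by rw [hH]; simp, ?_, ?_⟩
    · have hnn : 0 ≤ φ1 0 0 := by rw [hv1]; linarith
      rw [abs_of_nonneg hnn]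
      exact ne_of_lt h1'
    · have hnn : 0 ≤ φ2 0 0 := by rw [hv2]; linarith
      rw [abs_of_nonneg hnn]
      exact ne_of_lt h2'
end

section
/- For the reduced-model map H as above with φ_i(0,0) > 1 for i=1,2, there exists a unique fixed point E_i* on each positive coordinate axis A_i = {x_i > 0, x_j = 0}, and every orbit starting on A_i converges to E_i*. Moreover if φ_j(E_i*) < 1 for j ≠ i then E_i* is hyperbolic and locally attracting, while if φ_j(E_i*) > 1 then E_i* is hyperbolic and unstable. -/
open Filter

-- difference identity for f u = (rS/(1+c u)+rI/(1+d u)) * u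
lemma rma_f_diff (rS rI c d u v : ℝ) (hc : 0 < c) (hd : 0 < d)
    (hu : 0 ≤ u) (hv : 0 ≤ v) :
    (rS/(1+c*u)+rI/(1+d*u)) * u - (rS/(1+c*v)+rI/(1+d*v)) * v
      = (u - v) * (rS/((1+c*u)*(1+c*v)) + rI/((1+d*u)*(1+d*v))) := by
  have h1 : (0:ℝ) < 1 + c*u := by nlinarith
  have h2 : (0:ℝ) < 1 + c*v := by nlinarith
  have h3 : (0:ℝ) < 1 + d*u := by nlinarith
  have h4 : (0:ℝ) < 1 + d*v := by nlinarith
  field_simp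
  ring

-- g strictly antitone
lemma rma_g_anti (rS rI c d u v : ℝ) (hrS : 0 < rS) (hrI : 0 ≤ rI)
    (hc : 0 < c) (hd : 0 < d) (hu : 0 ≤ u) (huv : u < v) :
    rS/(1+c*v)+rI/(1+d*v) < rS/(1+c*u)+rI/(1+d*u) := by
  have h1 : (0:ℝ) < 1 + c*u := by nlinarith
  have h3 : (0:ℝ) < 1 + d*u := by nlinarith
  have hS : rS/(1+c*v) < rS/(1+c*u) := by
    apply div_lt_div_of_pos_left hrS h1; nlinarith
  have hI : rI/(1+d*v) ≤ rI/(1+d*u) :=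
    div_le_div_of_nonneg_left hrI h3 (by nlinarith)
  linarith

lemma rma_f_mono (rS rI c d u v : ℝ) (hrS : 0 < rS) (hrI : 0 ≤ rI)
    (hc : 0 < c) (hd : 0 < d) (hu : 0 ≤ u) (huv : u ≤ v) :
    (rS/(1+c*u)+rI/(1+d*u)) * u ≤ (rS/(1+c*v)+rI/(1+d*v)) * v := by
  have h1 : (0:ℝ) < 1 + c*u := by nlinarith
  have h2 : (0:ℝ) < 1 + c*v := by nlinarith
  have h3 : (0:ℝ) < 1 + d*u := by nlinarith
  have h4 : (0:ℝ) < 1 + d*v := by nlinarith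
  have := rma_f_diff rS rI c d u v hc hd hu (hu.trans huv)
  nlinarith [div_nonneg hrS.le (mul_pos h1 h2).le, div_nonneg hrI (mul_pos h3 h4).le]

-- Lipschitz bound on [m, ∞)
lemma rma_f_lip (rS rI c d m u v : ℝ) (hrS : 0 ≤ rS) (hrI : 0 ≤ rI)
    (hc : 0 < c) (hd : 0 < d) (hm : 0 ≤ m) (hu : m ≤ u) (hv : m ≤ v) :
    |(rS/(1+c*u)+rI/(1+d*u)) * u - (rS/(1+c*v)+rI/(1+d*v)) * v|
      ≤ (rS/(1+c*m)^2 + rI/(1+d*m)^2) * |u - v| := by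
  have hu0 : 0 ≤ u := hm.trans hu
  have hv0 : 0 ≤ v := hm.trans hv
  rw [rma_f_diff rS rI c d u v hc hd hu0 hv0, abs_mul, mul_comm]
  apply mul_le_mul_of_nonneg_right _ (abs_nonneg _)
  have h1 : (0:ℝ) < 1 + c*m := by nlinarith
  have h3 : (0:ℝ) < 1 + d*m := by nlinarith
  have h1u : 1 + c*m ≤ 1 + c*u := by nlinarith
  have h1v : 1 + c*m ≤ 1 + c*v := by nlinarith
  have h3u : 1 + d*m ≤ 1 + d*u := by nlinarith
  have h3v : 1 + d*m ≤ 1 + d*v := by nlinarith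
  have e1 : (0:ℝ) < (1+c*u)*(1+c*v) := by nlinarith
  have e2 : (0:ℝ) < (1+d*u)*(1+d*v) := by nlinarith
  have b1 : rS/((1+c*u)*(1+c*v)) ≤ rS/(1+c*m)^2 := by
    apply div_le_div_of_nonneg_left hrS (by positivity); nlinarith
  have b2 : rI/((1+d*u)*(1+d*v)) ≤ rI/(1+d*m)^2 := by
    apply div_le_div_of_nonneg_left hrI (by positivity); nlinarith
  have p1 : 0 ≤ rS/((1+c*u)*(1+c*v)) := div_nonneg hrS e1.le
  have p2 : 0 ≤ rI/((1+d*u)*(1+d*v)) := div_nonneg hrI e2.le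
  rw [abs_of_nonneg (by linarith)]
  linarith

-- existence of a positive root of g = 1
lemma rma_root (rS rI c d : ℝ) (hrS : 0 < rS) (hrI : 0 ≤ rI)
    (hc : 0 < c) (hd : 0 < d) (h1 : 1 < rS + rI) :
    ∃ x : ℝ, 0 < x ∧ rS/(1+c*x)+rI/(1+d*x) = 1 := by
  set B : ℝ := rS/c + rI/d + 1 with hB
  have hBpos : 0 < B := by rw [hB]; positivity
  clear_value B
  have hgB : rS/(1+c*B)+rI/(1+d*B) < 1 := by
    have h1 : (0:ℝ) < 1 + c*B := by nlinarith
    have h3 : (0:ℝ) < 1 + d*B := by nlinarith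
    have e1 : rS/(1+c*B) ≤ rS/(c*B) := by
      apply div_le_div_of_nonneg_left hrS.le (by positivity); linarith
    have e2 : rI/(1+d*B) ≤ rI/(d*B) := by
      rcases eq_or_lt_of_le hrI with h|h
      · simp [← h]
      · apply div_le_div_of_nonneg_left hrI (by positivity); linarith
    have key : rS/(c*B) + rI/(d*B) < 1 := by
      rw [div_add_div _ _ (by positivity) (by positivity), div_lt_one (by positivity)]
      have : rS * (d*B) + rI * (c*B) = (rS/c + rI/d) * (c*d*B) := by
        field_simp
      have hlt : rS/c + rI/d < B := by rw [hB]; linarith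
      have h2 := mul_lt_mul_of_pos_right hlt (mul_pos (mul_pos hc hd) hBpos)
      nlinarith [h2]
    linarith
  have hcont : ContinuousOn (fun x : ℝ => rS/(1+c*x)+rI/(1+d*x)) (Set.Icc 0 B) := by
    apply ContinuousOn.add
    · exact ContinuousOn.div continuousOn_const (by fun_prop)
        (fun x hx => by have := hx.1; positivity)
    · exact ContinuousOn.div continuousOn_const (by fun_prop)
        (fun x hx => by have := hx.1; positivity)
  have hg0 : (fun x : ℝ => rS/(1+c*x)+rI/(1+d*x)) 0 = rS + rI := by norm_num
  have := intermediate_value_Icc' hBpos.le hcont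
  have hmem : (1:ℝ) ∈ Set.Icc ((fun x : ℝ => rS/(1+c*x)+rI/(1+d*x)) B)
      ((fun x : ℝ => rS/(1+c*x)+rI/(1+d*x)) 0) := by
    rw [hg0]; exact ⟨hgB.le, h1.le⟩
  obtain ⟨x, hxmem, hxval⟩ := this hmem
  refine ⟨x, ?_, hxval⟩
  rcases eq_or_lt_of_le hxmem.1 with h|h
  · exfalso; rw [← h] at hxval; simp at hxval; linarith
  · exact h

lemma rma_oneD (rS rI c d : ℝ) (hrS : 0 < rS) (hrI : 0 ≤ rI)
    (hc : 0 < c) (hd : 0 < d) (x : ℝ) (hx : 0 < x)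
    (hgx : rS/(1+c*x)+rI/(1+d*x) = 1) (a : ℝ) (ha : 0 < a) :
    Tendsto (fun n => (fun u => (rS/(1+c*u)+rI/(1+d*u)) * u)^[n] a) atTop (nhds x) := by
  set f : ℝ → ℝ := fun u => (rS/(1+c*u)+rI/(1+d*u)) * u with hf
  have hfpos : ∀ u : ℝ, 0 < u → 0 < f u := by
    intro u hu
    have h1 : (0:ℝ) < 1 + c*u := by nlinarith
    have h3 : (0:ℝ) < 1 + d*u := by nlinarith
    have : 0 < rS/(1+c*u) := by positivity
    have : 0 ≤ rI/(1+d*u) := by positivity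
    simp only [hf]; nlinarith
  have hfx : f x = x := by simp only [hf, hgx, one_mul]
  have hgt : ∀ u : ℝ, 0 < u → u < x → u < f u := by
    intro u hu hux
    have := rma_g_anti rS rI c d u x hrS hrI hc hd hu.le hux
    rw [hgx] at this
    simp only [hf]; nlinarith
  have hlt : ∀ u : ℝ, x < u → f u < u := by
    intro u hxu
    have := rma_g_anti rS rI c d x u hrS hrI hc hd hx.le hxu
    rw [hgx] at this
    simp only [hf]; nlinarith
  have hcont : ∀ L : ℝ, 0 < L → ContinuousAt f L := by
    intro L hL
    apply ContinuousAt.mul _ continuousAt_id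
    apply ContinuousAt.add
    · exact ContinuousAt.div continuousAt_const (by fun_prop) (by nlinarith)
    · exact ContinuousAt.div continuousAt_const (by fun_prop) (by nlinarith)
  set seq : ℕ → ℝ := fun n => f^[n] a with hseq
  have hsucc : ∀ n, seq (n+1) = f (seq n) := fun n => Function.iterate_succ_apply' f n a
  have hzero : seq 0 = a := rfl
  have hseqpos : ∀ n, 0 < seq n := by
    intro n; induction n with
    | zero => exact ha
    | succ n ih => rw [hsucc]; exact hfpos _ ih
  have hmonof : ∀ u v : ℝ, 0 ≤ u → u ≤ v → f u ≤ f v :=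
    fun u v hu huv => rma_f_mono rS rI c d u v hrS hrI hc hd hu huv
  have limit_eq : ∀ L : ℝ, 0 < L → Tendsto seq atTop (nhds L) → L = x := by
    intro L hL htend
    have h1 : Tendsto (fun n => seq (n+1)) atTop (nhds L) :=
      htend.comp (tendsto_add_atTop_nat 1)
    have h2 : Tendsto (fun n => f (seq n)) atTop (nhds (f L)) :=
      (hcont L hL).tendsto.comp htend
    have h2' : Tendsto (fun n => seq (n+1)) atTop (nhds (f L)) := by
      simpa only [hsucc] using h2
    have hfL : f L = L := tendsto_nhds_unique h2' h1
    have hgL : rS/(1+c*L)+rI/(1+d*L) = 1 := by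
      have h' : (rS/(1+c*L)+rI/(1+d*L)) * L = 1 * L := by
        rw [one_mul]; exact hfL
      exact mul_right_cancel₀ (ne_of_gt hL) h'
    rcases lt_trichotomy L x with h|h|h
    · exfalso
      have := rma_g_anti rS rI c d L x hrS hrI hc hd hL.le h
      rw [hgx, hgL] at this; exact lt_irrefl _ this
    · exact h
    · exfalso
      have := rma_g_anti rS rI c d x L hrS hrI hc hd hx.le h
      rw [hgx, hgL] at this; exact lt_irrefl _ this
  rcases le_or_gt a x with hax | hax
  · -- increasing case
    have hub : ∀ n, seq n ≤ x := by
      intro n; induction n with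
      | zero => exact hax
      | succ n ih => rw [hsucc, ← hfx]; exact hmonof _ _ (hseqpos n).le ih
    have hmn : Monotone seq := by
      apply monotone_nat_of_le_succ
      intro n
      rcases lt_or_eq_of_le (hub n) with h|h
      · rw [hsucc]; exact (hgt _ (hseqpos n) h).le
      · rw [hsucc, h, hfx, ← h]
    have hbdd : BddAbove (Set.range seq) := ⟨x, by rintro _ ⟨n, rfl⟩; exact hub n⟩
    have htend := tendsto_atTop_ciSup hmn hbdd
    have hLa : a ≤ ⨆ n, seq n := hzero ▸ le_ciSup hbdd 0
    have : (⨆ n, seq n) = x := limit_eq _ (lt_of_lt_of_le ha hLa) htend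
    rw [this] at htend
    exact htend
  · -- decreasing case
    have hlb : ∀ n, x ≤ seq n := by
      intro n; induction n with
      | zero => exact hax.le
      | succ n ih => rw [hsucc, ← hfx]; exact hmonof _ _ hx.le ih
    have hmn : Antitone seq := by
      apply antitone_nat_of_succ_le
      intro n
      rcases lt_or_eq_of_le (hlb n) with h|h
      · rw [hsucc]; exact (hlt _ h).le
      · rw [hsucc, ← h, hfx, h]
    have hbdd : BddBelow (Set.range seq) := ⟨x, by rintro _ ⟨n, rfl⟩; exact hlb n⟩
    have htend := tendsto_atTop_ciInf hmn hbdd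
    have hLx : x ≤ ⨅ n, seq n := le_ciInf hlb
    have : (⨅ n, seq n) = x := limit_eq _ (lt_of_lt_of_le hx hLx) htend
    rw [this] at htend
    exact htend

-- sensitivity in the second variable
lemma rma_frac_v (r a b u v : ℝ) (hr : 0 ≤ r) (ha : 0 < a) (hb : 0 < b)
    (hu : 0 ≤ u) (hv : 0 ≤ v) :
    |r/(1+a*u+b*v) - r/(1+a*u)| ≤ r*b*v := by
  have hD1 : (0:ℝ) < 1+a*u+b*v := by nlinarith
  have hD2 : (0:ℝ) < 1+a*u := by nlinarith
  have hle : r/(1+a*u+b*v) ≤ r/(1+a*u) :=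
    div_le_div_of_nonneg_left hr hD2 (by nlinarith)
  rw [abs_sub_comm, abs_of_nonneg (by linarith)]
  have hid : r/(1+a*u) - r/(1+a*u+b*v) = (r*b*v)/((1+a*u)*(1+a*u+b*v)) := by
    field_simp; ring
  rw [hid]
  have e1 : (1:ℝ) ≤ 1+a*u := by nlinarith
  have e2 : (1:ℝ) ≤ 1+a*u+b*v := by nlinarith
  have hprod : (1:ℝ) ≤ (1+a*u)*(1+a*u+b*v) := by
    calc (1:ℝ) = 1*1 := by ring
    _ ≤ (1+a*u)*(1+a*u+b*v) := mul_le_mul e1 e2 zero_le_one (by linarith)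
  exact div_le_self (by positivity) hprod

-- sensitivity of r/(1+a*u+b*v) around (x,0)
lemma rma_frac_uv (r a b x u v : ℝ) (hr : 0 ≤ r) (ha : 0 < a) (hb : 0 < b)
    (hx : 0 ≤ x) (hu : 0 ≤ u) (hv : 0 ≤ v) :
    |r/(1+a*u+b*v) - r/(1+a*x)| ≤ r*(a*|u-x| + b*v) := by
  have hD1 : (0:ℝ) < 1+a*u+b*v := by nlinarith
  have hD2 : (0:ℝ) < 1+a*x := by nlinarith
  have hw1 : u - x ≤ |u-x| := le_abs_self _
  have hw2 : x - u ≤ |u-x| := by rw [abs_sub_comm]; exact le_abs_self _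
  have hw0 : 0 ≤ |u-x| := abs_nonneg _
  have hs : (1:ℝ) ≤ (1+a*u+b*v)*(1+a*x) := by
    have e1 : (1:ℝ) ≤ 1+a*u+b*v := by nlinarith
    have e2 : (1:ℝ) ≤ 1+a*x := by nlinarith
    calc (1:ℝ) = 1*1 := by ring
    _ ≤ (1+a*u+b*v)*(1+a*x) := mul_le_mul e1 e2 zero_le_one (by linarith)
  have hrhs : 0 ≤ r*(a*|u-x| + b*v) := by positivity
  rw [abs_le]
  constructor
  · have hid : r/(1+a*x) - r/(1+a*u+b*v) = r*(a*(u-x)+b*v)/((1+a*u+b*v)*(1+a*x)) := by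
      field_simp; ring
    have : r/(1+a*x) - r/(1+a*u+b*v) ≤ r*(a*|u-x| + b*v) := by
      rw [hid, div_le_iff₀ (by positivity)]
      have hnum : r*(a*(u-x)+b*v) ≤ r*(a*|u-x|+b*v) := by
        apply mul_le_mul_of_nonneg_left _ hr; nlinarith
      nlinarith
    linarith
  · have hid : r/(1+a*u+b*v) - r/(1+a*x) = r*(a*(x-u)-b*v)/((1+a*u+b*v)*(1+a*x)) := by
      field_simp; ring
    rw [hid, div_le_iff₀ (by positivity)]
    have hnum : r*(a*(x-u)-b*v) ≤ r*(a*|u-x|+b*v) := by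
      apply mul_le_mul_of_nonneg_left _ hr; nlinarith [mul_pos hb (lt_of_lt_of_le zero_lt_one le_rfl)]
    nlinarith

set_option maxHeartbeats 2000000 in
lemma rma_master
    (rS1 rI1 rS2 rI2 : ℝ) (hrS1 : 0 < rS1) (hrI1 : 0 ≤ rI1)
    (hrS2 : 0 < rS2) (hrI2 : 0 ≤ rI2)
    (c1S1 c1S2 c1I1 c1I2 c2S1 c2S2 c2I1 c2I2 : ℝ)
    (hc1S1 : 0 < c1S1) (hc1S2 : 0 < c1S2) (hc1I1 : 0 < c1I1) (hc1I2 : 0 < c1I2)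
    (hc2S1 : 0 < c2S1) (hc2S2 : 0 < c2S2) (hc2I1 : 0 < c2I1) (hc2I2 : 0 < c2I2)
    (φ1 φ2 : ℝ → ℝ → ℝ)
    (hφ1 : ∀ x1 x2, φ1 x1 x2 =
      rS1 / (1 + c1S1 * x1 + c1S2 * x2) + rI1 / (1 + c1I1 * x1 + c1I2 * x2))
    (hφ2 : ∀ x1 x2, φ2 x1 x2 =
      rS2 / (1 + c2S1 * x1 + c2S2 * x2) + rI2 / (1 + c2I1 * x1 + c2I2 * x2))
    (H : ℝ × ℝ → ℝ × ℝ)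
    (hH : ∀ p : ℝ × ℝ, H p = (φ1 p.1 p.2 * p.1, φ2 p.1 p.2 * p.2))
    (h1 : 1 < φ1 0 0) :
    (∃! x : ℝ, 0 < x ∧ H (x, 0) = (x, 0)) ∧
      ∀ x : ℝ, 0 < x → H (x, 0) = (x, 0) →
        (∀ a : ℝ, 0 < a →
          Filter.Tendsto (fun n => H^[n] (a, 0)) Filter.atTop (nhds (x, 0))) ∧
        (φ2 x 0 < 1 → ∃ ε > 0, ∀ p : ℝ × ℝ, 0 ≤ p.1 → 0 ≤ p.2 →
          dist p (x, 0) < ε →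
          Filter.Tendsto (fun n => H^[n] p) Filter.atTop (nhds (x, 0))) ∧
        (1 < φ2 x 0 → ∃ ε > 0, ∀ δ > 0, ∃ p : ℝ × ℝ,
          0 ≤ p.1 ∧ 0 ≤ p.2 ∧ dist p (x, 0) < δ ∧
          ∃ n : ℕ, ε ≤ dist (H^[n] p) (x, 0)) := by
  have h1' : 1 < rS1 + rI1 := by rw [hφ1 0 0] at h1; norm_num at h1; exact h1
  have hφ1ax : ∀ u : ℝ, φ1 u 0 = rS1/(1+c1S1*u)+rI1/(1+c1I1*u) := by
    intro u; rw [hφ1]; norm_num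
  have hφ2ax : ∀ u : ℝ, φ2 u 0 = rS2/(1+c2S1*u)+rI2/(1+c2I1*u) := by
    intro u; rw [hφ2]; norm_num
  have hHax : ∀ u : ℝ, H (u, 0) = (φ1 u 0 * u, 0) := by
    intro u; rw [hH]; simp
  have hfix : ∀ u : ℝ, 0 < u →
      (H (u,0) = (u,0) ↔ rS1/(1+c1S1*u)+rI1/(1+c1I1*u) = 1) := by
    intro u hu
    rw [hHax u, hφ1ax u]
    constructor
    · intro h
      have h' := congrArg Prod.fst h
      simp only at h'
      exact mul_right_cancel₀ (ne_of_gt hu) (by rw [one_mul]; exact h')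
    · intro h; rw [h, one_mul]
  have guniq : ∀ u v : ℝ, 0 < u → 0 < v →
      rS1/(1+c1S1*u)+rI1/(1+c1I1*u) = 1 → rS1/(1+c1S1*v)+rI1/(1+c1I1*v) = 1 → u = v := by
    intro u v hu hv h₁ h₂
    rcases lt_trichotomy u v with h|h|h
    · exfalso
      have := rma_g_anti rS1 rI1 c1S1 c1I1 u v hrS1 hrI1 hc1S1 hc1I1 hu.le h
      rw [h₁, h₂] at this; exact lt_irrefl _ this
    · exact h
    · exfalso
      have := rma_g_anti rS1 rI1 c1S1 c1I1 v u hrS1 hrI1 hc1S1 hc1I1 hv.le h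
      rw [h₁, h₂] at this; exact lt_irrefl _ this
  obtain ⟨x₀, hx₀, hgx₀⟩ := rma_root rS1 rI1 c1S1 c1I1 hrS1 hrI1 hc1S1 hc1I1 h1'
  constructor
  · exact ⟨x₀, ⟨hx₀, (hfix x₀ hx₀).mpr hgx₀⟩,
      fun y ⟨hy, hyfix⟩ => guniq y x₀ hy hx₀ ((hfix y hy).mp hyfix) hgx₀⟩
  intro x hx hxfix
  have hgx : rS1/(1+c1S1*x)+rI1/(1+c1I1*x) = 1 := (hfix x hx).mp hxfix
  refine ⟨?_, ?_, ?_⟩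
  · -- axis convergence
    intro a ha
    have hiter : ∀ n, H^[n] (a,0) =
        ((fun u => (rS1/(1+c1S1*u)+rI1/(1+c1I1*u))*u)^[n] a, 0) := by
      intro n; induction n with
      | zero => rfl
      | succ n ih =>
        rw [Function.iterate_succ_apply', ih, Function.iterate_succ_apply',
          hHax, hφ1ax]
    have h1d := rma_oneD rS1 rI1 c1S1 c1I1 hrS1 hrI1 hc1S1 hc1I1 x hx hgx a ha
    simp only [hiter]
    exact h1d.prodMk_nhds tendsto_const_nhds
  · -- local attractivity
    intro hB
    rw [hφ2ax] at hB
    have hd2x : (0:ℝ) < 1+c2S1*x := by positivity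
    have hd2x' : (0:ℝ) < 1+c2I1*x := by positivity
    obtain ⟨φs, hφs⟩ : ∃ t:ℝ, t = rS2/(1+c2S1*x)+rI2/(1+c2I1*x) := ⟨_, rfl⟩
    rw [← hφs] at hB
    have hφs0 : 0 ≤ φs := by rw [hφs]; positivity
    obtain ⟨θ, hθ⟩ : ∃ t:ℝ, t = (1+φs)/2 := ⟨_, rfl⟩
    have hθ1 : θ < 1 := by rw [hθ]; linarith
    have hθφ : φs < θ := by rw [hθ]; linarith
    have hθ0 : 0 < θ := by rw [hθ]; linarith
    have hdl1 : (0:ℝ) < 1+c1S1*(x/2) := by positivity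
    have hdl2 : (0:ℝ) < 1+c1I1*(x/2) := by positivity
    obtain ⟨lam, hlam⟩ : ∃ t:ℝ, t = rS1/(1+c1S1*(x/2))^2 + rI1/(1+c1I1*(x/2))^2 := ⟨_, rfl⟩
    have hlam0 : 0 ≤ lam := by rw [hlam]; positivity
    have hlam1 : lam < 1 := by
      have hd1x : (0:ℝ) < 1+c1S1*x := by positivity
      have hd1x' : (0:ℝ) < 1+c1I1*x := by positivity
      have t1 : rS1/(1+c1S1*(x/2))^2 < rS1/(1+c1S1*x) := by
        apply div_lt_div_of_pos_left hrS1 hd1x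
        have h0 : 0 < c1S1*x := mul_pos hc1S1 hx
        have hsq : 0 < (c1S1*x)^2 := by positivity
        nlinarith [h0, hsq]
      have t2 : rI1/(1+c1I1*(x/2))^2 ≤ rI1/(1+c1I1*x) := by
        apply div_le_div_of_nonneg_left hrI1 hd1x'
        have h0 : 0 < c1I1*x := mul_pos hc1I1 hx
        have hsq : 0 < (c1I1*x)^2 := by positivity
        nlinarith [h0, hsq]
      rw [hlam]; linarith [hgx]
    obtain ⟨L, hLdef⟩ : ∃ t:ℝ, t = rS1*c1S2 + rI1*c1I2 := ⟨_, rfl⟩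
    have hL0 : 0 < L := by rw [hLdef]; linarith [mul_pos hrS1 hc1S2, mul_nonneg hrI1 hc1I2.le]
    obtain ⟨M, hMdef⟩ : ∃ t:ℝ, t = rS2*(c2S1+c2S2) + rI2*(c2I1+c2I2) := ⟨_, rfl⟩
    have hM0 : 0 ≤ M := by
      rw [hMdef]
      have := mul_nonneg hrS2.le (by linarith : (0:ℝ) ≤ c2S1+c2S2)
      have := mul_nonneg hrI2 (by linarith : (0:ℝ) ≤ c2I1+c2I2)
      linarith
    obtain ⟨μ', hμ'⟩ : ∃ t:ℝ, t = (1+θ)/2 := ⟨_, rfl⟩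
    have hμ'θ : θ < μ' := by rw [hμ']; linarith
    have hμ'1 : μ' < 1 := by rw [hμ']; linarith
    have hμ'0 : 0 < μ' := by rw [hμ']; linarith
    obtain ⟨K, hKdef⟩ : ∃ t:ℝ, t = ((x+1)*L*2)/(1-θ) + 1 := ⟨_, rfl⟩
    have hK1 : 1 ≤ K := by
      rw [hKdef]
      have : 0 ≤ ((x+1)*L*2)/(1-θ) := by
        apply div_nonneg _ (by linarith)
        have := mul_nonneg (mul_nonneg (by linarith : (0:ℝ) ≤ x+1) hL0.le) (by norm_num : (0:ℝ) ≤ 2)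
        linarith
      linarith
    have hK0 : 0 < K := lt_of_lt_of_le zero_lt_one hK1
    have hKkey : (x+1)*L + K*θ ≤ K*μ' := by
      have hq : (0:ℝ) < 1-θ := by linarith
      have hKq : K*(1-θ) = (x+1)*L*2 + (1-θ) := by
        rw [hKdef]; field_simp
      rw [hμ']
      linarith [hKq]
    obtain ⟨μ, hμdef⟩ : ∃ t:ℝ, t = max lam μ' := ⟨_, rfl⟩
    have hμ1 : μ < 1 := by rw [hμdef]; exact max_lt hlam1 hμ'1
    have hμ0 : 0 < μ := by rw [hμdef]; exact lt_of_lt_of_le hμ'0 (le_max_right _ _)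
    have hμlam : lam ≤ μ := by rw [hμdef]; exact le_max_left _ _
    have hμμ' : μ' ≤ μ := by rw [hμdef]; exact le_max_right _ _
    obtain ⟨ρ, hρdef⟩ : ∃ t:ℝ, t = min (x/2) (min 1 (((1-φs)/2)/(2*M+1))) := ⟨_, rfl⟩
    have hρ0 : 0 < ρ := by
      rw [hρdef]
      apply lt_min (by linarith)
      apply lt_min zero_lt_one
      apply div_pos (by linarith) (by linarith)
    have hρx2 : ρ ≤ x/2 := by rw [hρdef]; exact min_le_left _ _
    have hρ1 : ρ ≤ 1 := by rw [hρdef]; exact le_trans (min_le_right _ _) (min_le_left _ _)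
    have hρM : ρ*(2*M) ≤ (1-φs)/2 := by
      have h' : ρ ≤ ((1-φs)/2)/(2*M+1) := by
        rw [hρdef]; exact le_trans (min_le_right _ _) (min_le_right _ _)
      have h'' := mul_le_mul_of_nonneg_right h' (by linarith : (0:ℝ) ≤ 2*M+1)
      rw [div_mul_cancel₀ _ (by linarith : (2*M+1) ≠ 0)] at h''
      linarith [hρ0]
    -- the contraction step
    have step : ∀ u v : ℝ, 0 ≤ u → 0 ≤ v → |u-x| + K*v ≤ ρ →
        0 ≤ φ1 u v * u ∧ 0 ≤ φ2 u v * v ∧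
        |φ1 u v * u - x| + K*(φ2 u v * v) ≤ μ*(|u-x| + K*v) := by
      intro u v hu hv hV
      have hKv0 : 0 ≤ K*v := mul_nonneg hK0.le hv
      have hw0 : 0 ≤ |u-x| := abs_nonneg _
      have hwρ : |u-x| ≤ ρ := by linarith
      have hvρ : v ≤ ρ := by
        have := mul_le_mul_of_nonneg_right hK1 hv
        linarith
      have hul : x/2 ≤ u := by
        have := abs_le.mp (le_trans hwρ hρx2)
        linarith [this.1]
      have huu : u ≤ x+1 := by
        have := abs_le.mp (le_trans hwρ hρ1)
        linarith [this.2]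
      have hD1 : (0:ℝ) < 1+c1S1*u+c1S2*v := by positivity
      have hD2 : (0:ℝ) < 1+c1I1*u+c1I2*v := by positivity
      have hD3 : (0:ℝ) < 1+c2S1*u+c2S2*v := by positivity
      have hD4 : (0:ℝ) < 1+c2I1*u+c2I2*v := by positivity
      have hφ1nn : 0 ≤ φ1 u v := by
        rw [hφ1]; positivity
      have hφ2nn : 0 ≤ φ2 u v := by
        rw [hφ2]; positivity
      refine ⟨mul_nonneg hφ1nn hu, mul_nonneg hφ2nn hv, ?_⟩
      -- bound on first component
      have hA1 : |φ1 u v - φ1 u 0| ≤ L*v := by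
        rw [hφ1 u v, hφ1ax u]
        have e1 := rma_frac_v rS1 c1S1 c1S2 u v hrS1.le hc1S1 hc1S2 hu hv
        have e2 := rma_frac_v rI1 c1I1 c1I2 u v hrI1 hc1I1 hc1I2 hu hv
        calc |rS1/(1+c1S1*u+c1S2*v) + rI1/(1+c1I1*u+c1I2*v)
              - (rS1/(1+c1S1*u)+rI1/(1+c1I1*u))|
            ≤ |rS1/(1+c1S1*u+c1S2*v) - rS1/(1+c1S1*u)|
              + |rI1/(1+c1I1*u+c1I2*v) - rI1/(1+c1I1*u)| := by
              have := abs_add_le (rS1/(1+c1S1*u+c1S2*v) - rS1/(1+c1S1*u))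
                (rI1/(1+c1I1*u+c1I2*v) - rI1/(1+c1I1*u))
              calc _ = |rS1/(1+c1S1*u+c1S2*v) - rS1/(1+c1S1*u)
                  + (rI1/(1+c1I1*u+c1I2*v) - rI1/(1+c1I1*u))| := by ring_nf
                _ ≤ _ := this
          _ ≤ rS1*c1S2*v + rI1*c1I2*v := add_le_add e1 e2
          _ = L*v := by rw [hLdef]; ring
      have hA1' : |φ1 u v * u - φ1 u 0 * u| ≤ (x+1)*(L*v) := by
        have : φ1 u v * u - φ1 u 0 * u = (φ1 u v - φ1 u 0) * u := by ring
        rw [this, abs_mul, abs_of_nonneg hu]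
        have h1'' := mul_le_mul_of_nonneg_right hA1 hu
        have h2'' : (L*v)*u ≤ (L*v)*(x+1) :=
          mul_le_mul_of_nonneg_left huu (mul_nonneg hL0.le hv)
        calc |φ1 u v - φ1 u 0| * u ≤ (L*v)*u := h1''
          _ ≤ (L*v)*(x+1) := h2''
          _ = (x+1)*(L*v) := by ring
      have hfxx : (rS1/(1+c1S1*x)+rI1/(1+c1I1*x))*x = x := by rw [hgx, one_mul]
      have hA2 : |φ1 u 0 * u - x| ≤ lam*|u-x| := by
        rw [hφ1ax u, ← hfxx]
        have := rma_f_lip rS1 rI1 c1S1 c1I1 (x/2) u x hrS1.le hrI1 hc1S1 hc1I1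
          (by linarith) hul (by linarith)
        rw [hfxx]
        calc |(rS1/(1+c1S1*u)+rI1/(1+c1I1*u))*u - x|
            = |(rS1/(1+c1S1*u)+rI1/(1+c1I1*u))*u
              - (rS1/(1+c1S1*x)+rI1/(1+c1I1*x))*x| := by rw [hfxx]
          _ ≤ lam*|u-x| := by rw [hlam]; exact this
      -- bound on φ2
      have hB2 : φ2 u v ≤ θ := by
        have e1 := rma_frac_uv rS2 c2S1 c2S2 x u v hrS2.le hc2S1 hc2S2 hx.le hu hv
        have e2 := rma_frac_uv rI2 c2I1 c2I2 x u v hrI2 hc2I1 hc2I2 hx.le hu hv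
        have e1' := (abs_le.mp e1).2
        have e2' := (abs_le.mp e2).2
        have hsum : φ2 u v - φs ≤ M*(|u-x| + v) := by
          rw [hφ2, hφs, hMdef]
          linarith [e1', e2', mul_nonneg hrS2.le (mul_nonneg hc2S2.le hw0),
            mul_nonneg hrS2.le (mul_nonneg hc2S1.le hv),
            mul_nonneg hrI2 (mul_nonneg hc2I2.le hw0),
            mul_nonneg hrI2 (mul_nonneg hc2I1.le hv)]
        have h2'' : M*(|u-x| + v) ≤ M*(ρ+ρ) :=
          mul_le_mul_of_nonneg_left (add_le_add hwρ hvρ) hM0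
        have h3'' : M*(ρ+ρ) = ρ*(2*M) := by ring
        linarith [hρM]
      -- combine
      have hsub : |φ1 u v * u - x| ≤ lam*|u-x| + (x+1)*(L*v) := by
        calc |φ1 u v * u - x|
            ≤ |φ1 u v * u - φ1 u 0 * u| + |φ1 u 0 * u - x| := by
              have := abs_add_le (φ1 u v * u - φ1 u 0 * u) (φ1 u 0 * u - x)
              calc _ = |φ1 u v * u - φ1 u 0 * u + (φ1 u 0 * u - x)| := by ring_nf
                _ ≤ _ := this
          _ ≤ (x+1)*(L*v) + lam*|u-x| := add_le_add hA1' hA2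
          _ = lam*|u-x| + (x+1)*(L*v) := by ring
      have hsnd : K*(φ2 u v * v) ≤ K*(θ*v) := by
        apply mul_le_mul_of_nonneg_left _ hK0.le
        exact mul_le_mul_of_nonneg_right hB2 hv
      have hmu1 : lam*|u-x| ≤ μ*|u-x| :=
        mul_le_mul_of_nonneg_right hμlam hw0
      have hmu2 : K*μ'*v ≤ K*μ*v := by
        apply mul_le_mul_of_nonneg_right _ hv
        exact mul_le_mul_of_nonneg_left hμμ' hK0.le
      have hKey' : (x+1)*(L*v) + K*(θ*v) ≤ K*μ'*v := by
        have := mul_le_mul_of_nonneg_right hKkey hv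
        linarith [this]
      calc |φ1 u v * u - x| + K*(φ2 u v * v)
          ≤ (lam*|u-x| + (x+1)*(L*v)) + K*(θ*v) := add_le_add hsub hsnd
        _ ≤ μ*|u-x| + K*μ*v := by linarith
        _ = μ*(|u-x| + K*v) := by ring
    -- set up epsilon and conclude
    refine ⟨ρ/(1+K), by positivity, ?_⟩
    intro p hp1 hp2 hdist
    rw [Prod.dist_eq] at hdist
    have hd1 : |p.1 - x| < ρ/(1+K) := by
      have h' : dist p.1 x < ρ/(1+K) := lt_of_le_of_lt le_sup_left hdist
      rwa [Real.dist_eq] at h'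
    have hd2 : p.2 < ρ/(1+K) := by
      have h' : dist p.2 (0:ℝ) < ρ/(1+K) := lt_of_le_of_lt le_sup_right hdist
      rw [Real.dist_eq, sub_zero] at h'
      exact lt_of_le_of_lt (le_abs_self _) h'
    have hVp : |p.1 - x| + K*p.2 ≤ ρ := by
      have h1K : (0:ℝ) < 1+K := by linarith
      have he : (1+K)*(ρ/(1+K)) = ρ := by field_simp
      have := mul_le_mul_of_nonneg_left hd2.le hK0.le
      linarith
    have orbit : ∀ n, 0 ≤ (H^[n] p).1 ∧ 0 ≤ (H^[n] p).2 ∧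
        |(H^[n] p).1 - x| + K*(H^[n] p).2 ≤ μ^n * ρ := by
      intro n; induction n with
      | zero => exact ⟨hp1, hp2, by rw [pow_zero, one_mul]; exact hVp⟩
      | succ n ih =>
        obtain ⟨ih1, ih2, ih3⟩ := ih
        have hpow1 : μ^n ≤ 1 := pow_le_one₀ hμ0.le hμ1.le
        have hVn : |(H^[n] p).1 - x| + K*(H^[n] p).2 ≤ ρ := by
          have := mul_le_mul_of_nonneg_right hpow1 hρ0.le
          linarith
        obtain ⟨s1, s2, s3⟩ := step (H^[n] p).1 (H^[n] p).2 ih1 ih2 hVn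
        rw [Function.iterate_succ_apply', hH]
        refine ⟨s1, s2, ?_⟩
        calc |φ1 (H^[n] p).1 (H^[n] p).2 * (H^[n] p).1 - x|
            + K*(φ2 (H^[n] p).1 (H^[n] p).2 * (H^[n] p).2)
            ≤ μ*(|(H^[n] p).1 - x| + K*(H^[n] p).2) := s3
          _ ≤ μ*(μ^n * ρ) := mul_le_mul_of_nonneg_left ih3 hμ0.le
          _ = μ^(n+1) * ρ := by ring
    have hgeo : Filter.Tendsto (fun n => μ^n * ρ) Filter.atTop (nhds 0) := by
      have := (tendsto_pow_atTop_nhds_zero_of_lt_one hμ0.le hμ1).mul_const ρ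
      simpa using this
    have habs1 : ∀ n, |(H^[n] p).1 - x| ≤ μ^n * ρ := by
      intro n
      obtain ⟨o1, o2, o3⟩ := orbit n
      linarith [mul_nonneg hK0.le o2]
    have habs2 : ∀ n, |(H^[n] p).2 - 0| ≤ μ^n * ρ := by
      intro n
      obtain ⟨o1, o2, o3⟩ := orbit n
      rw [sub_zero, abs_of_nonneg o2]
      have := mul_le_mul_of_nonneg_right hK1 o2
      linarith [abs_nonneg ((H^[n] p).1 - x)]
    have comp1 : Filter.Tendsto (fun n => (H^[n] p).1) Filter.atTop (nhds x) := by
      rw [tendsto_iff_dist_tendsto_zero]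
      apply squeeze_zero (fun n => dist_nonneg) _ hgeo
      intro n
      rw [Real.dist_eq]; exact habs1 n
    have comp2 : Filter.Tendsto (fun n => (H^[n] p).2) Filter.atTop (nhds 0) := by
      rw [tendsto_iff_dist_tendsto_zero]
      apply squeeze_zero (fun n => dist_nonneg) _ hgeo
      intro n
      rw [Real.dist_eq]; exact habs2 n
    have := comp1.prodMk_nhds comp2
    simpa using this
  · -- instability
    intro hC
    rw [hφ2ax] at hC
    obtain ⟨φs, hφs⟩ : ∃ t:ℝ, t = rS2/(1+c2S1*x)+rI2/(1+c2I1*x) := ⟨_, rfl⟩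
    rw [← hφs] at hC
    obtain ⟨θ, hθ⟩ : ∃ t:ℝ, t = (1+φs)/2 := ⟨_, rfl⟩
    have hθ1 : 1 < θ := by rw [hθ]; linarith
    have hθφ : θ < φs := by rw [hθ]; linarith
    obtain ⟨M, hMdef⟩ : ∃ t:ℝ, t = rS2*(c2S1+c2S2) + rI2*(c2I1+c2I2) := ⟨_, rfl⟩
    have hM0 : 0 ≤ M := by
      rw [hMdef]
      have := mul_nonneg hrS2.le (by linarith : (0:ℝ) ≤ c2S1+c2S2)
      have := mul_nonneg hrI2 (by linarith : (0:ℝ) ≤ c2I1+c2I2)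
      linarith
    obtain ⟨ε, hεdef⟩ : ∃ t:ℝ, t = min (x/2) (((φs-1)/2)/(2*M+1)) := ⟨_, rfl⟩
    have hε0 : 0 < ε := by
      rw [hεdef]
      exact lt_min (by linarith) (div_pos (by linarith) (by linarith))
    have hεx : ε ≤ x/2 := by rw [hεdef]; exact min_le_left _ _
    have hεM : ε*(2*M) ≤ (φs-1)/2 := by
      have h' : ε ≤ ((φs-1)/2)/(2*M+1) := by rw [hεdef]; exact min_le_right _ _
      have h'' := mul_le_mul_of_nonneg_right h' (by linarith : (0:ℝ) ≤ 2*M+1)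
      rw [div_mul_cancel₀ _ (by linarith : (2*M+1) ≠ 0)] at h''
      linarith [hε0]
    refine ⟨ε, hε0, ?_⟩
    intro δ hδ
    refine ⟨(x, δ/2), hx.le, by positivity, ?_, ?_⟩
    · show dist ((x:ℝ), δ/2) ((x:ℝ), (0:ℝ)) < δ
      rw [Prod.dist_eq]
      show dist x x ⊔ dist (δ/2) (0:ℝ) < δ
      rw [dist_self, Real.dist_eq, sub_zero,
        abs_of_nonneg (by linarith : (0:ℝ) ≤ δ/2)]
      exact sup_lt_iff.mpr ⟨by linarith, by linarith⟩
    · by_contra hcon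
      push_neg at hcon
      have grow : ∀ n, 0 ≤ (H^[n] (x, δ/2)).1 ∧ 0 ≤ (H^[n] (x, δ/2)).2 ∧
          θ^n * (δ/2) ≤ (H^[n] (x, δ/2)).2 := by
        intro n; induction n with
        | zero =>
          simp only [Function.iterate_zero_apply]
          exact ⟨hx.le, by linarith, by rw [pow_zero, one_mul]⟩
        | succ n ih =>
          obtain ⟨u, v, huv⟩ : ∃ u v, H^[n] (x, δ/2) = (u, v) := ⟨_, _, rfl⟩
          obtain ⟨ih1, ih2, ih3⟩ := ih
          rw [huv] at ih1 ih2 ih3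
          have hdn := hcon n
          rw [huv, Prod.dist_eq] at hdn
          have hw : |u - x| < ε := by
            have h' : dist u x < ε := lt_of_le_of_lt le_sup_left hdn
            rwa [Real.dist_eq] at h'
          have hv' : v < ε := by
            have h' : dist v (0:ℝ) < ε := lt_of_le_of_lt le_sup_right hdn
            rw [Real.dist_eq, sub_zero] at h'
            exact lt_of_le_of_lt (le_abs_self _) h'
          have hw0 : 0 ≤ |u - x| := abs_nonneg _
          have e1 := rma_frac_uv rS2 c2S1 c2S2 x u v hrS2.le hc2S1 hc2S2 hx.le ih1 ih2
          have e2 := rma_frac_uv rI2 c2I1 c2I2 x u v hrI2 hc2I1 hc2I2 hx.le ih1 ih2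
          have e1' := (abs_le.mp e1).1
          have e2' := (abs_le.mp e2).1
          have hsum : φs - φ2 u v ≤ M*(|u - x| + v) := by
            rw [hφ2, hφs, hMdef]
            linarith [e1', e2', mul_nonneg hrS2.le (mul_nonneg hc2S2.le hw0),
              mul_nonneg hrS2.le (mul_nonneg hc2S1.le ih2),
              mul_nonneg hrI2 (mul_nonneg hc2I2.le hw0),
              mul_nonneg hrI2 (mul_nonneg hc2I1.le ih2)]
          have hMwv : M*(|u - x| + v) ≤ ε*(2*M) := by
            have h2'' : M*(|u - x| + v) ≤ M*(ε+ε) :=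
              mul_le_mul_of_nonneg_left (by linarith : |u-x| + v ≤ ε+ε) hM0
            have h3'' : M*(ε+ε) = ε*(2*M) := by ring
            linarith
          have hφ2θ : θ ≤ φ2 u v := by linarith
          have hD1 : (0:ℝ) < 1+c1S1*u+c1S2*v := by positivity
          have hD2 : (0:ℝ) < 1+c1I1*u+c1I2*v := by positivity
          have hφ1nn : 0 ≤ φ1 u v := by rw [hφ1]; positivity
          rw [Function.iterate_succ_apply', huv, hH]
          refine ⟨mul_nonneg hφ1nn ih1, mul_nonneg (by linarith) ih2, ?_⟩
          show θ^(n+1)*(δ/2) ≤ φ2 u v * v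
          have hpw : (0:ℝ) ≤ θ^n * (δ/2) := by positivity
          calc θ^(n+1)*(δ/2) = θ*(θ^n*(δ/2)) := by ring
            _ ≤ φ2 u v * v := mul_le_mul hφ2θ ih3 hpw (by linarith)
      obtain ⟨n, hn⟩ :=
        ((tendsto_pow_atTop_atTop_of_one_lt hθ1).eventually_ge_atTop (2*ε/δ + 1)).exists
      have h2 := (grow n).2.2
      have hvn : (H^[n] (x, δ/2)).2 < ε := by
        have hdn := hcon n
        rw [Prod.dist_eq] at hdn
        have h' : dist (H^[n] (x, δ/2)).2 (0:ℝ) < ε := lt_of_le_of_lt le_sup_right hdn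
        rw [Real.dist_eq, sub_zero] at h'
        exact lt_of_le_of_lt (le_abs_self _) h'
      have hmul : (2*ε/δ+1)*(δ/2) ≤ θ^n * (δ/2) :=
        mul_le_mul_of_nonneg_right hn (by linarith)
      have heq : (2*ε/δ+1)*(δ/2) = ε + δ/2 := by field_simp
      linarith

theorem reduced_map_axis_equilibria
    (rS1 rI1 rS2 rI2 : ℝ) (hrS1 : 0 < rS1) (hrI1 : 0 ≤ rI1)
    (hrS2 : 0 < rS2) (hrI2 : 0 ≤ rI2)
    (c1S1 c1S2 c1I1 c1I2 c2S1 c2S2 c2I1 c2I2 : ℝ)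
    (hc1S1 : 0 < c1S1) (hc1S2 : 0 < c1S2) (hc1I1 : 0 < c1I1) (hc1I2 : 0 < c1I2)
    (hc2S1 : 0 < c2S1) (hc2S2 : 0 < c2S2) (hc2I1 : 0 < c2I1) (hc2I2 : 0 < c2I2)
    (φ1 φ2 : ℝ → ℝ → ℝ)
    (hφ1 : ∀ x1 x2, φ1 x1 x2 =
      rS1 / (1 + c1S1 * x1 + c1S2 * x2) + rI1 / (1 + c1I1 * x1 + c1I2 * x2))
    (hφ2 : ∀ x1 x2, φ2 x1 x2 =
      rS2 / (1 + c2S1 * x1 + c2S2 * x2) + rI2 / (1 + c2I1 * x1 + c2I2 * x2))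
    (H : ℝ × ℝ → ℝ × ℝ)
    (hH : ∀ p : ℝ × ℝ, H p = (φ1 p.1 p.2 * p.1, φ2 p.1 p.2 * p.2))
    (h1 : 1 < φ1 0 0) (h2 : 1 < φ2 0 0) :
    ((∃! x : ℝ, 0 < x ∧ H (x, 0) = (x, 0)) ∧
      ∀ x : ℝ, 0 < x → H (x, 0) = (x, 0) →
        (∀ a : ℝ, 0 < a →
          Filter.Tendsto (fun n => H^[n] (a, 0)) Filter.atTop (nhds (x, 0))) ∧
        (φ2 x 0 < 1 → ∃ ε > 0, ∀ p : ℝ × ℝ, 0 ≤ p.1 → 0 ≤ p.2 →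
          dist p (x, 0) < ε →
          Filter.Tendsto (fun n => H^[n] p) Filter.atTop (nhds (x, 0))) ∧
        (1 < φ2 x 0 → ∃ ε > 0, ∀ δ > 0, ∃ p : ℝ × ℝ,
          0 ≤ p.1 ∧ 0 ≤ p.2 ∧ dist p (x, 0) < δ ∧
          ∃ n : ℕ, ε ≤ dist (H^[n] p) (x, 0))) ∧
    ((∃! y : ℝ, 0 < y ∧ H (0, y) = (0, y)) ∧
      ∀ y : ℝ, 0 < y → H (0, y) = (0, y) →
        (∀ a : ℝ, 0 < a →
          Filter.Tendsto (fun n => H^[n] (0, a)) Filter.atTop (nhds (0, y))) ∧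
        (φ1 0 y < 1 → ∃ ε > 0, ∀ p : ℝ × ℝ, 0 ≤ p.1 → 0 ≤ p.2 →
          dist p (0, y) < ε →
          Filter.Tendsto (fun n => H^[n] p) Filter.atTop (nhds (0, y))) ∧
        (1 < φ1 0 y → ∃ ε > 0, ∀ δ > 0, ∃ p : ℝ × ℝ,
          0 ≤ p.1 ∧ 0 ≤ p.2 ∧ dist p (0, y) < δ ∧
          ∃ n : ℕ, ε ≤ dist (H^[n] p) (0, y))) := by
  constructor
  · exact rma_master rS1 rI1 rS2 rI2 hrS1 hrI1 hrS2 hrI2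
      c1S1 c1S2 c1I1 c1I2 c2S1 c2S2 c2I1 c2I2
      hc1S1 hc1S2 hc1I1 hc1I2 hc2S1 hc2S2 hc2I1 hc2I2
      φ1 φ2 hφ1 hφ2 H hH h1
  · obtain ⟨Hs, hHs⟩ : ∃ F : ℝ×ℝ → ℝ×ℝ, ∀ p : ℝ×ℝ,
        F p = ((H (p.2, p.1)).2, (H (p.2, p.1)).1) := ⟨_, fun _ => rfl⟩
    obtain ⟨ψ1, hψ1⟩ : ∃ f : ℝ→ℝ→ℝ, ∀ a b : ℝ, f a b = φ2 b a := ⟨_, fun _ _ => rfl⟩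
    obtain ⟨ψ2, hψ2⟩ : ∃ f : ℝ→ℝ→ℝ, ∀ a b : ℝ, f a b = φ1 b a := ⟨_, fun _ _ => rfl⟩
    have key := rma_master rS2 rI2 rS1 rI1 hrS2 hrI2 hrS1 hrI1
      c2S2 c2S1 c2I2 c2I1 c1S2 c1S1 c1I2 c1I1
      hc2S2 hc2S1 hc2I2 hc2I1 hc1S2 hc1S1 hc1I2 hc1I1
      ψ1 ψ2
      (fun a b => by rw [hψ1, hφ2 b a]; ring)
      (fun a b => by rw [hψ2, hφ1 b a]; ring)
      Hs
      (fun p => by rw [hHs, hH (p.2, p.1), hψ1, hψ2])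
      (by rw [hψ1]; exact h2)
    have hIter : ∀ (q : ℝ×ℝ) (n : ℕ),
        H^[n] (q.2, q.1) = ((Hs^[n] q).2, (Hs^[n] q).1) := by
      intro q n; induction n with
      | zero => rfl
      | succ n ih =>
        rw [Function.iterate_succ_apply', Function.iterate_succ_apply', ih, hHs]
    have hdistsw : ∀ p q : ℝ×ℝ, dist ((p.2 : ℝ), p.1) ((q.2 : ℝ), q.1) = dist p q := by
      intro p q
      rw [Prod.dist_eq, Prod.dist_eq]
      exact sup_comm _ _
    have hc : Continuous (fun p : ℝ×ℝ => ((p.2 : ℝ), p.1)) :=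
      continuous_snd.prodMk continuous_fst
    obtain ⟨⟨y₀, hy₀, hy₀uniq⟩, kAll⟩ := key
    have fixconv : ∀ y : ℝ, H (0, y) = (0, y) → Hs (y, 0) = (y, 0) := by
      intro y hyfix
      rw [hHs]
      show ((H (0, y)).2, (H (0, y)).1) = (y, 0)
      rw [hyfix]
    constructor
    · refine ⟨y₀, ⟨hy₀.1, ?_⟩, ?_⟩
      · have h := hy₀.2
        rw [hHs] at h
        have ha := congrArg Prod.fst h
        have hb := congrArg Prod.snd h
        exact Prod.ext hb ha
      · rintro y ⟨hy, hyfix⟩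
        exact hy₀uniq y ⟨hy, fixconv y hyfix⟩
    · intro y hy hyfix
      obtain ⟨kA, kB, kC⟩ := kAll y hy (fixconv y hyfix)
      refine ⟨?_, ?_, ?_⟩
      · intro a ha
        have ht := kA a ha
        have hcomp := (hc.tendsto (y, 0)).comp ht
        have heq : (fun n => H^[n] ((0 : ℝ), a)) =
            fun n => ((Hs^[n] (a, 0)).2, (Hs^[n] (a, 0)).1) :=
          funext fun n => hIter (a, 0) n
        rw [heq]; exact hcomp
      · intro hattr
        obtain ⟨ε, hε, hball⟩ := kB (by rw [hψ2]; exact hattr)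
        refine ⟨ε, hε, ?_⟩
        intro p hp1 hp2 hdistp
        have hd : dist ((p.2 : ℝ), p.1) (y, 0) < ε := by
          have e : dist ((p.2 : ℝ), p.1) (y, 0) = dist p (0, y) := hdistsw p (0, y)
          rw [e]; exact hdistp
        have ht := hball (p.2, p.1) hp2 hp1 hd
        have hcomp := (hc.tendsto (y, 0)).comp ht
        have heq : (fun n => H^[n] p) =
            fun n => ((Hs^[n] (p.2, p.1)).2, (Hs^[n] (p.2, p.1)).1) :=
          funext fun n => hIter (p.2, p.1) n
        rw [heq]; exact hcomp
      · intro hrep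
        obtain ⟨ε, hε, hunst⟩ := kC (by rw [hψ2]; exact hrep)
        refine ⟨ε, hε, ?_⟩
        intro δ hδ
        obtain ⟨q, hq1, hq2, hqd, n, hn⟩ := hunst δ hδ
        refine ⟨(q.2, q.1), hq2, hq1, ?_, n, ?_⟩
        · have e : dist ((q.2 : ℝ), q.1) ((0 : ℝ), y) = dist q (y, 0) := hdistsw q (y, 0)
          rw [e]; exact hqd
        · have e2 : H^[n] ((q.2 : ℝ), q.1) = ((Hs^[n] q).2, (Hs^[n] q).1) := hIter q n
          rw [e2]
          have e3 : dist ((Hs^[n] q).2, (Hs^[n] q).1) ((0 : ℝ), y) =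
            dist (Hs^[n] q) (y, 0) := hdistsw (Hs^[n] q) (y, 0)
          rw [e3]; exact hn
end
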